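/- arXiv:1810.05750 — 6 statements merged into one kernel-verified Lean document; each statement's English description precedes it below -/
import Mathlib

section
/- For every nonempty partition λ, exactly one of the following holds: either j ≤ k and ρ₁⁻¹λ is a well-defined Young diagram, or j > k and ψ₂⁻¹λ is a well-defined Young diagram, where j is the first row length and k the first column height of λ. Here ρ₁⁻¹ removes the first column, takes away one box, and inserts the remaining boxes as a new first row, and ψ₂⁻¹ removes the first row, takes away two boxes, and inserts the remaining boxes as a new first column. -/
/-- A partition, represented as its Young diagram: the weakly decreasing list of
(positive) row lengths, row `0` being the bottom (longest) row. -/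
structure YDPartition where
  rows : List ℕ
  sorted : rows.Pairwise (· ≥ ·)
  pos : ∀ x ∈ rows, 0 < x

namespace YDPartition

/-- The number of boxes of the diagram. -/
def size (p : YDPartition) : ℕ := p.rows.sum

/-- The length of row `i` (zero for rows above the diagram). -/
def row (p : YDPartition) (i : ℕ) : ℕ := p.rows.getD i 0

/-- The height `k` of the first column, i.e. the number of rows. -/
def colHeight (p : YDPartition) : ℕ := p.rows.length

/-- The length `j` of the first (bottom) row. -/
def rowLen (p : YDPartition) : ℕ := p.row 0

/-- The height of column `c` (columns indexed from `0`). -/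
def colH (p : YDPartition) (c : ℕ) : ℕ :=
  ((Finset.range p.colHeight).filter (fun r => c < p.row r)).card

/-- The arm of the box in row `r` and column `c`: the number of boxes strictly
above it in its column. -/
def arm (p : YDPartition) (r c : ℕ) : ℕ :=
  ((Finset.Ioo r p.colHeight).filter (fun r' => c < p.row r')).card

/-- The leg of the box in row `r` and column `c`: the number of boxes strictly
to its right in its row. -/
def leg (p : YDPartition) (r c : ℕ) : ℕ := p.row r - 1 - c

/-- The boxes of the diagram, as (row, column) pairs. -/
def cells (p : YDPartition) : Finset (ℕ × ℕ) :=
  (Finset.range p.colHeight ×ˢ Finset.range p.rowLen).filter (fun b => b.2 < p.row b.1)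

/-- `w̃t(λ) = #{□ ∈ λ : a(□) + 1 ≡ l(□) (mod 3)}`. -/
def wtt (p : YDPartition) : ℕ :=
  (p.cells.filter (fun b => (p.arm b.1 b.2 + 1) % 3 = p.leg b.1 b.2 % 3)).card

/-- `wt(λ) = #{□ ∈ λ : l(□) > 1 and a(□) + 1 ≡ l(□) (mod 3)}`. -/
def wt (p : YDPartition) : ℕ :=
  (p.cells.filter (fun b => 1 < p.leg b.1 b.2 ∧ (p.arm b.1 b.2 + 1) % 3 = p.leg b.1 b.2 % 3)).card

/-- A list of naturals is (the row list of) a well-defined Young diagram iff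
it is weakly decreasing with positive entries. -/
def IsYD (l : List ℕ) : Prop := l.Pairwise (· ≥ ·) ∧ ∀ x ∈ l, 0 < x

instance (l : List ℕ) : Decidable (IsYD l) := by unfold IsYD; exact inferInstance

/-- The empty partition. -/
def emptyP : YDPartition := ⟨[], List.Pairwise.nil, by simp⟩

/-- The row list of `ρ₁λ`: remove the first row (length `j`), add one box to it,
and insert the resulting `j + 1` boxes as a new first column. -/
def rho1Rows (p : YDPartition) : List ℕ :=
  (List.range (p.rowLen + 1)).map
    (fun i => p.rows.tail.getD i 0 + 1)

/-- The row list of `ψ₂λ`: remove the first column (height `k`), add two boxes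
to it, and insert the resulting `k + 2` boxes as a new first row. -/
def psi2Rows (p : YDPartition) : List ℕ :=
  (p.colHeight + 2) :: (p.rows.map (· - 1)).filter (fun x => decide (0 < x))

/-- `ρ₁`, as a partially defined map: defined exactly when the new first column
(height `j + 1`) is at least as high as the rest of the diagram (height `k - 1`),
i.e. when `j ≥ k - 2`. -/
def rho1? (p : YDPartition) : Option YDPartition :=
  if h : p.colHeight ≤ p.rowLen + 2 ∧ IsYD (rho1Rows p)
  then some ⟨rho1Rows p, h.2.1, h.2.2⟩ else none

/-- `ψ₂`, as a partially defined map: defined exactly when the result is a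
well-defined Young diagram, i.e. when `j ≤ k + 3`. -/
def psi2? (p : YDPartition) : Option YDPartition :=
  if h : IsYD (psi2Rows p) then some ⟨psi2Rows p, h.1, h.2⟩ else none

/-- Apply `ρ₁` (for `a = 1`) or `ψ₂` (for `a = 2`). -/
def step (a : ℕ) (p : YDPartition) : Option YDPartition :=
  if a = 1 then rho1? p else psi2? p

/-- Apply a `{1,2}`-word to the empty partition, the leftmost entry being the
first map applied. -/
def applyWord (w : List ℕ) : Option YDPartition :=
  w.foldlM (fun p a => step a p) emptyP

end YDPartition

namespace YDPartition

/-- The row list of `ρ₁⁻¹λ`: remove the first column (height `k`), take away one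
box, and insert the remaining `k - 1` boxes as a new first row. -/
def rho1invRows (p : YDPartition) : List ℕ :=
  ((p.colHeight - 1) :: p.rows.map (· - 1)).filter (fun x => decide (0 < x))

/-- The row list of `ψ₂⁻¹λ`: remove the first row (length `j`), take away two
boxes, and insert the remaining `j - 2` boxes as a new first column. -/
def psi2invRows (p : YDPartition) : List ℕ :=
  (List.range (max (p.rowLen - 2) (p.colHeight - 1))).map
    (fun i => p.rows.tail.getD i 0 + if i < p.rowLen - 2 then 1 else 0)

end YDPartition

namespace YDPartition

lemma getD_anti {l : List ℕ} (h : l.Pairwise (· ≥ ·)) {i i' : ℕ} (hii : i ≤ i') :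
    l.getD i' 0 ≤ l.getD i 0 := by
  by_cases h' : i' < l.length
  · have hi : i < l.length := lt_of_le_of_lt hii h'
    rw [List.getD_eq_getElem _ _ h', List.getD_eq_getElem _ _ hi]
    rcases eq_or_lt_of_le hii with rfl | hlt
    · exact le_refl _
    · exact List.pairwise_iff_getElem.mp h i i' hi h' hlt
  · rw [List.getD_eq_default _ _ (le_of_not_gt h')]
    exact Nat.zero_le _

end YDPartition

open YDPartition in
/-- for every nonempty partition, exactly one of the following
holds: `j ≤ k` and `ρ₁⁻¹λ` is a well-defined Young diagram, or `j > k` and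
`ψ₂⁻¹λ` is a well-defined Young diagram. -/
theorem inverse_dyson_dichotomy (p : YDPartition) (hne : p.rows ≠ []) :
    Xor' (p.rowLen ≤ p.colHeight ∧ IsYD (rho1invRows p))
      (p.colHeight < p.rowLen ∧ IsYD (psi2invRows p)) := by
  have hk : 0 < p.colHeight := List.length_pos_iff.mpr hne
  obtain ⟨r₀, t, hr⟩ := List.exists_cons_of_ne_nil hne
  have hj0 : p.rowLen = r₀ := by simp [rowLen, row, hr]
  have hle : ∀ x ∈ p.rows, x ≤ p.rowLen := by
    intro x hx
    rw [hj0]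
    rw [hr] at hx
    rcases List.mem_cons.mp hx with rfl | hx
    · exact le_refl _
    · have := p.sorted
      rw [hr, List.pairwise_cons] at this
      exact this.1 x hx
  have htail : p.rows.tail.Pairwise (· ≥ ·) := p.sorted.tail
  by_cases hjk : p.rowLen ≤ p.colHeight
  · refine Or.inl ⟨⟨hjk, ?_, ?_⟩, fun h => absurd h.1 (not_lt.mpr hjk)⟩
    · -- sorted
      have hs : ((p.colHeight - 1) :: p.rows.map (· - 1)).Pairwise (· ≥ ·) := by
        rw [List.pairwise_cons]
        constructor
        · intro b hb
          obtain ⟨x, hx, rfl⟩ := List.mem_map.mp hb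
          exact Nat.sub_le_sub_right ((hle x hx).trans hjk) 1
        · exact List.Pairwise.map _ (fun a b h => Nat.sub_le_sub_right h 1) p.sorted
      exact hs.sublist List.filter_sublist
    · intro x hx
      have := (List.mem_filter.mp hx).2
      simpa using this
  · have hkj : p.colHeight < p.rowLen := lt_of_not_ge hjk
    refine Or.inr ⟨⟨hkj, ?_, ?_⟩, fun h => hjk h.1⟩
    · -- sorted
      unfold psi2invRows
      have hmax : max (p.rowLen - 2) (p.colHeight - 1) = p.rowLen - 2 := by omega
      rw [hmax]
      apply List.pairwise_iff_getElem.mpr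
      intro a b ha hb hab
      simp only [List.length_map, List.length_range] at ha hb
      simp only [List.getElem_map, List.getElem_range, if_pos ha, if_pos hb]
      exact Nat.succ_le_succ (getD_anti htail hab.le)
    · intro x hx
      unfold psi2invRows at hx
      have hmax : max (p.rowLen - 2) (p.colHeight - 1) = p.rowLen - 2 := by omega
      rw [hmax] at hx
      obtain ⟨i, hi, rfl⟩ := List.mem_map.mp hx
      rw [List.mem_range] at hi
      simp [hi]
end

section
/- The map φ sending a partition λ of n to the sequence of subscripts in its unique expression as a composition of ρ₁'s and ψ₂'s applied to the empty partition is an injective map from the set of partitions of n to the set of {1,2}-compositions of n. -/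
namespace PartAux

lemma sum_filter_pos (l : List ℕ) :
    (l.filter (fun x => decide (0 < x))).sum = l.sum := by
  induction l with
  | nil => simp
  | cons a t ih =>
    by_cases h : 0 < a
    · simp [List.filter_cons, h, ih]
    · simp only [List.filter_cons]
      have : a = 0 := by omega
      simp [this, ih]

lemma getD_all_zero {l : List ℕ} (h : ∀ x ∈ l, x = 0) (i : ℕ) : l.getD i 0 = 0 := by
  rcases Nat.lt_or_ge i l.length with hi | hi
  · rw [List.getD_eq_getElem _ _ hi]
    exact h _ (List.getElem_mem hi)
  · exact List.getD_eq_default _ _ hi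

lemma filter_pos_getD {l : List ℕ} (h : l.Pairwise (· ≥ ·)) (i : ℕ) :
    (l.filter (fun x => decide (0 < x))).getD i 0 = l.getD i 0 := by
  induction l generalizing i with
  | nil => simp
  | cons a t ih =>
    rcases Nat.eq_zero_or_pos a with ha | ha
    · have ht : ∀ x ∈ a :: t, x = 0 := by
        intro x hx
        rcases List.mem_cons.1 hx with rfl | hx
        · exact ha
        · have := (List.pairwise_cons.1 h).1 x hx
          omega
      have hf : (a :: t).filter (fun x => decide (0 < x)) = [] := by
        rw [List.filter_eq_nil_iff]
        intro x hx
        simp [ht x hx]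
      rw [hf, getD_all_zero ht]
      simp
    · rw [List.filter_cons_of_pos (by simpa using ha)]
      cases i with
      | zero => simp
      | succ i => simpa using ih (List.pairwise_cons.1 h).2 i

lemma sum_getD_range (l : List ℕ) (n : ℕ) (h : l.length ≤ n) :
    ((List.range n).map (fun i => l.getD i 0)).sum = l.sum := by
  induction l generalizing n with
  | nil => simp
  | cons a t ih =>
    obtain ⟨m, rfl⟩ : ∃ m, n = m + 1 := ⟨n - 1, by simp at h; omega⟩
    rw [List.range_succ_eq_map, List.map_cons, List.map_map]
    simp only [Function.comp_def, List.getD_cons_zero, List.getD_cons_succ, List.sum_cons]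
    rw [ih m (by simp at h; omega)]

lemma filter_pos_range_getD (l : List ℕ) (hpos : ∀ x ∈ l, 0 < x) (n : ℕ) (h : l.length ≤ n) :
    ((List.range n).map (fun i => l.getD i 0)).filter (fun x => decide (0 < x)) = l := by
  induction l generalizing n with
  | nil =>
    simp only [List.getD_nil]
    rw [List.filter_eq_nil_iff]
    intro x hx
    simp only [List.mem_map] at hx
    obtain ⟨i, _, rfl⟩ := hx
    simp
  | cons a t ih =>
    obtain ⟨m, rfl⟩ : ∃ m, n = m + 1 := ⟨n - 1, by simp at h; omega⟩
    rw [List.range_succ_eq_map, List.map_cons, List.map_map]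
    simp only [Function.comp_def, List.getD_cons_zero, List.getD_cons_succ]
    rw [List.filter_cons_of_pos (by simpa using hpos a (by simp))]
    rw [ih (fun x hx => hpos x (by simp [hx])) m (by simp at h; omega)]

lemma getD_anti {l : List ℕ} (h : l.Pairwise (· ≥ ·)) {i j : ℕ} (hij : i ≤ j) :
    l.getD j 0 ≤ l.getD i 0 := by
  rcases Nat.lt_or_ge j l.length with hj | hj
  · have hi : i < l.length := lt_of_le_of_lt hij hj
    rw [List.getD_eq_getElem _ _ hj, List.getD_eq_getElem _ _ hi]
    rcases Nat.eq_or_lt_of_le hij with rfl | hlt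
    · exact le_refl _
    · exact List.pairwise_iff_getElem.1 h i j hi hj hlt
  · rw [List.getD_eq_default _ _ hj]
    exact Nat.zero_le _

lemma sum_map_range_add_one (g : ℕ → ℕ) (n : ℕ) :
    ((List.range n).map (fun i => g i + 1)).sum = ((List.range n).map g).sum + n := by
  induction n with
  | zero => simp
  | succ m ih => rw [List.range_succ]; simp [ih]; omega

lemma sum_map_sub_one {l : List ℕ} (h : ∀ x ∈ l, 0 < x) :
    (l.map (· - 1)).sum = l.sum - l.length := by
  induction l with
  | nil => simp
  | cons a t ih =>
    have ha := h a (by simp)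
    have hs : ∀ x ∈ t, 0 < x := fun x hx => h x (by simp [hx])
    have hts : t.length ≤ t.sum := by
      have h2 : (t.map (fun _ => 1)).sum ≤ (t.map id).sum := List.sum_le_sum (fun x hx => hs x hx)
      simpa using h2
    simp [ih hs]
    omega

lemma map_sub_one_getD (l : List ℕ) (i : ℕ) :
    (l.map (· - 1)).getD i 0 = l.getD i 0 - 1 := by
  rcases Nat.lt_or_ge i l.length with hi | hi
  · rw [List.getD_eq_getElem _ _ (by simpa using hi), List.getD_eq_getElem _ _ hi]
    simp
  · rw [List.getD_eq_default _ _ (by simpa using hi), List.getD_eq_default _ _ hi]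

lemma range_getD_eq (l : List ℕ) :
    (List.range l.length).map (fun i => l.getD i 0) = l := by
  apply List.ext_getElem (by simp)
  intro i h1 h2
  simp only [List.getElem_map, List.getElem_range]
  exact List.getD_eq_getElem _ _ h2

end PartAux

namespace YDPartition

theorem ext' {p q : YDPartition} (h : p.rows = q.rows) : p = q := by
  cases p; cases q; simpa using h

lemma rows_sum_eq (q : YDPartition) : q.rows.sum = q.rowLen + q.rows.tail.sum := by
  cases hq : q.rows with
  | nil => simp [rowLen, row, hq]
  | cons a t => simp [rowLen, row, hq]

lemma rho1_size {q p : YDPartition} (h : rho1? q = some p) : p.size = q.size + 1 := by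
  unfold rho1? at h
  split_ifs at h with hc
  · have hrows : p.rows = rho1Rows q := (congrArg YDPartition.rows (Option.some.inj h)).symm
    have hlen : q.rows.tail.length ≤ q.rowLen + 1 := by
      have h2 := hc.1
      unfold colHeight at h2
      cases hq : q.rows with
      | nil => simp
      | cons a t =>
        rw [hq] at h2
        simp only [List.length_cons] at h2
        simp only [List.tail_cons]
        omega
    have hsum : (rho1Rows q).sum = q.rows.tail.sum + (q.rowLen + 1) := by
      unfold rho1Rows
      rw [PartAux.sum_map_range_add_one, PartAux.sum_getD_range _ _ hlen]
    unfold size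
    rw [hrows, hsum, rows_sum_eq q]
    omega

lemma psi2_size {q p : YDPartition} (h : psi2? q = some p) : p.size = q.size + 2 := by
  unfold psi2? at h
  split_ifs at h with hc
  · have hrows : p.rows = psi2Rows q := (congrArg YDPartition.rows (Option.some.inj h)).symm
    unfold size
    rw [hrows]
    unfold psi2Rows
    rw [List.sum_cons, PartAux.sum_filter_pos, PartAux.sum_map_sub_one q.pos]
    unfold colHeight
    have hls : q.rows.length ≤ q.rows.sum := by
      have h2 : (q.rows.map (fun _ => 1)).sum ≤ (q.rows.map id).sum :=
        List.sum_le_sum (fun x hx => q.pos x hx)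
      simpa using h2
    omega

lemma mem_le_rowLen {p : YDPartition} {x : ℕ} (hx : x ∈ p.rows) : x ≤ p.rowLen := by
  cases hq : p.rows with
  | nil => simp [hq] at hx
  | cons a t =>
    rw [hq] at hx
    have hs := p.sorted
    rw [hq, List.pairwise_cons] at hs
    rcases List.mem_cons.1 hx with rfl | hx
    · simp [rowLen, row, hq]
    · have := hs.1 x hx
      simp only [rowLen, row, hq, List.getD_cons_zero]
      omega

lemma rho1_surj {p : YDPartition} (hne : p.rows ≠ []) (hjk : p.rowLen ≤ p.colHeight) :
    ∃ q : YDPartition, rho1? q = some p := by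
  by_cases hk : p.colHeight = 1
  · have h1 : p.rows = [1] := by
      cases hq : p.rows with
      | nil => exact absurd hq hne
      | cons a t =>
        have hlen := hk
        unfold colHeight at hlen
        rw [hq] at hlen
        simp only [List.length_cons] at hlen
        have ht : t = [] := List.length_eq_zero_iff.1 (by omega)
        subst ht
        have hra : p.rowLen = a := by simp [rowLen, row, hq]
        have ha0 : 0 < a := p.pos a (by rw [hq]; simp)
        have ha1 : a = 1 := by
          rw [hra, hk] at hjk
          omega
        rw [ha1]
    refine ⟨emptyP, ?_⟩
    unfold rho1?
    rw [dif_pos (by decide)]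
    exact congrArg some (ext' (by rw [h1]; rfl))
  · have hk2 : 2 ≤ p.colHeight := by
      have : p.rows.length ≠ 0 := fun h => hne (List.length_eq_zero_iff.1 h)
      unfold colHeight at *
      omega
    set strip := (p.rows.map (· - 1)).filter (fun x => decide (0 < x)) with hstrip
    have hmapsorted : (p.rows.map (· - 1)).Pairwise (· ≥ ·) :=
      List.Pairwise.map _ (fun a b hab => Nat.sub_le_sub_right hab 1) p.sorted
    have hstripsorted : strip.Pairwise (· ≥ ·) := hmapsorted.filter _
    have hstrippos : ∀ x ∈ strip, 0 < x := by
      intro x hx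
      have := List.of_mem_filter hx
      simpa using this
    have hstriple : ∀ x ∈ strip, p.colHeight - 1 ≥ x := by
      intro x hx
      have hx' := List.mem_of_mem_filter hx
      obtain ⟨y, hy, rfl⟩ := List.mem_map.1 hx'
      have := mem_le_rowLen hy
      omega
    have hqyd : IsYD ((p.colHeight - 1) :: strip) := by
      constructor
      · rw [List.pairwise_cons]
        exact ⟨hstriple, hstripsorted⟩
      · intro x hx
        rcases List.mem_cons.1 hx with rfl | hx
        · omega
        · exact hstrippos x hx
    refine ⟨⟨(p.colHeight - 1) :: strip, hqyd.1, hqyd.2⟩, ?_⟩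
    set q : YDPartition := ⟨(p.colHeight - 1) :: strip, hqyd.1, hqyd.2⟩ with hqdef
    have hqrowLen : q.rowLen = p.colHeight - 1 := by simp [rowLen, row, hqdef]
    have hstripgetD : ∀ i, strip.getD i 0 = p.rows.getD i 0 - 1 := by
      intro i
      rw [hstrip, PartAux.filter_pos_getD hmapsorted, PartAux.map_sub_one_getD]
    have hrr : rho1Rows q = p.rows := by
      unfold rho1Rows
      have htail : q.rows.tail = strip := rfl
      rw [htail, hqrowLen]
      have hck : p.colHeight - 1 + 1 = p.rows.length := by unfold colHeight at *; omega
      rw [hck]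
      apply List.ext_getElem (by simp)
      intro i h1 h2
      simp only [List.getElem_map, List.getElem_range]
      rw [hstripgetD i, List.getD_eq_getElem _ _ h2]
      have := p.pos _ (List.getElem_mem h2)
      omega
    have hcond : q.colHeight ≤ q.rowLen + 2 ∧ IsYD (rho1Rows q) := by
      constructor
      · have h1 : strip.length ≤ p.rows.length :=
          le_trans (List.length_filter_le _ _) (le_of_eq (by simp))
        have h2 : q.rows.length = strip.length + 1 := by simp [hqdef]
        unfold colHeight at *
        rw [h2, hqrowLen]
        omega
      · rw [hrr]; exact ⟨p.sorted, p.pos⟩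
    unfold rho1?
    rw [dif_pos hcond]
    exact congrArg some (ext' hrr)

lemma psi2_surj {p : YDPartition} (hne : p.rows ≠ []) (hjk : p.colHeight < p.rowLen) :
    ∃ q : YDPartition, psi2? q = some p := by
  have hch1 : 1 ≤ p.colHeight := by
    unfold colHeight
    cases hq : p.rows with
    | nil => exact absurd hq hne
    | cons a t => simp
  have hj2 : 2 ≤ p.rowLen := by omega
  set t := p.rows.tail with htdef
  have htsorted : t.Pairwise (· ≥ ·) := by
    rw [htdef]
    cases hq : p.rows with
    | nil => simp
    | cons a s =>
      have hs := p.sorted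
      rw [hq, List.pairwise_cons] at hs
      simpa using hs.2
  have htpos : ∀ x ∈ t, 0 < x := fun x hx => p.pos x (List.mem_of_mem_tail hx)
  have htlen : t.length ≤ p.rowLen - 2 := by
    have h2 : t.length = p.colHeight - 1 := by
      unfold colHeight
      rw [htdef, List.length_tail]
    omega
  set qrows := (List.range (p.rowLen - 2)).map (fun i => t.getD i 0 + 1) with hqr
  have hqsorted : qrows.Pairwise (· ≥ ·) := by
    rw [hqr]
    refine List.Pairwise.map _ ?_ (List.pairwise_lt_range (n := p.rowLen - 2))
    intro a b hab
    have := PartAux.getD_anti htsorted (le_of_lt hab)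
    omega
  have hqpos : ∀ x ∈ qrows, 0 < x := by
    intro x hx
    rw [hqr] at hx
    obtain ⟨i, _, rfl⟩ := List.mem_map.1 hx
    omega
  refine ⟨⟨qrows, hqsorted, hqpos⟩, ?_⟩
  set q : YDPartition := ⟨qrows, hqsorted, hqpos⟩ with hqdef
  have hqch : q.colHeight = p.rowLen - 2 := by
    unfold colHeight
    simp [hqdef, hqr]
  have hpr : psi2Rows q = p.rows := by
    unfold psi2Rows
    rw [hqch]
    have hmap : q.rows.map (· - 1) = (List.range (p.rowLen - 2)).map (fun i => t.getD i 0) := by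
      show qrows.map (· - 1) = _
      rw [hqr, List.map_map]
      congr 1
    rw [hmap, PartAux.filter_pos_range_getD t htpos _ htlen]
    cases hrows : p.rows with
    | nil => exact absurd hrows hne
    | cons a s =>
      have ha : a = p.rowLen := by simp [rowLen, row, hrows]
      have hts : t = s := by rw [htdef, hrows]; rfl
      rw [hts]
      congr 1
      omega
  have hcond : IsYD (psi2Rows q) := by rw [hpr]; exact ⟨p.sorted, p.pos⟩
  unfold psi2?
  rw [dif_pos hcond]
  exact congrArg some (ext' hpr)

end YDPartition

namespace YDPartition

lemma applyWord_append (w : List ℕ) (a : ℕ) (q p : YDPartition)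
    (hw : applyWord w = some q) (hs : step a q = some p) :
    applyWord (w ++ [a]) = some p := by
  unfold applyWord at *
  rw [List.foldlM_append, hw]
  simpa using hs

lemma exists_word : ∀ (n : ℕ) (p : YDPartition), p.size = n →
    ∃ w : List ℕ, (∀ a ∈ w, a = 1 ∨ a = 2) ∧ applyWord w = some p ∧ w.sum = n := by
  intro n
  induction n using Nat.strong_induction_on with
  | _ n ih =>
    intro p hp
    by_cases hne : p.rows = []
    · have hp0 : p = emptyP := ext' (by rw [hne]; rfl)
      have hn0 : n = 0 := by rw [← hp, hp0]; rfl
      exact ⟨[], by simp, by rw [hp0]; rfl, by simp [hn0]⟩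
    · by_cases hjk : p.rowLen ≤ p.colHeight
      · obtain ⟨q, hq⟩ := rho1_surj hne hjk
        have hsize := rho1_size hq
        have hlt : q.size < n := by omega
        obtain ⟨w, hw1, hw2, hw3⟩ := ih q.size hlt q rfl
        refine ⟨w ++ [1], ?_, ?_, ?_⟩
        · intro a ha
          rcases List.mem_append.1 ha with h | h
          · exact hw1 a h
          · left; simpa using h
        · exact applyWord_append w 1 q p hw2 (by simpa [step] using hq)
        · simp only [List.sum_append, List.sum_cons, List.sum_nil, hw3]
          omega
      · obtain ⟨q, hq⟩ := psi2_surj hne (by omega)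
        have hsize := psi2_size hq
        have hlt : q.size < n := by omega
        obtain ⟨w, hw1, hw2, hw3⟩ := ih q.size hlt q rfl
        refine ⟨w ++ [2], ?_, ?_, ?_⟩
        · intro a ha
          rcases List.mem_append.1 ha with h | h
          · exact hw1 a h
          · right; simpa using h
        · exact applyWord_append w 2 q p hw2 (by simpa [step] using hq)
        · simp only [List.sum_append, List.sum_cons, List.sum_nil, hw3]
          omega

end YDPartition


open YDPartition in
/-- the map `φ` sending a partition of `n` to the sequence of
subscripts in its expression as a composition of `ρ₁`s and `ψ₂`s applied to the
empty partition is an injective map from partitions of `n` to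
`{1,2}`-compositions of `n`. -/
theorem phi_injective_into_compositions (n : ℕ) :
    ∃ φ : {p : YDPartition // p.size = n} →
        {w : List ℕ // (∀ a ∈ w, a = 1 ∨ a = 2) ∧ w.sum = n},
      Function.Injective φ ∧ ∀ p, applyWord (φ p).1 = some p.1 := by
  have h : ∀ p : {p : YDPartition // p.size = n},
      ∃ w : List ℕ, (∀ a ∈ w, a = 1 ∨ a = 2) ∧ applyWord w = some p.1 ∧ w.sum = n :=
    fun p => exists_word n p.1 p.2
  choose f h1 h2 h3 using h
  refine ⟨fun p => ⟨f p, h1 p, h3 p⟩, ?_, fun p => h2 p⟩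
  intro p q hpq
  have hfw : f p = f q := congrArg Subtype.val hpq
  have hsome : some p.1 = some q.1 := by rw [← h2 p, ← h2 q, hfw]
  exact Subtype.ext (Option.some.inj hsome)
end

section
/- If λ is a partition for which ρ₁λ is defined, then w̃t(ρ₁λ) = w̃t(λ), where w̃t(μ) is the number of boxes □ ∈ μ with a(□) + 1 ≡ l(□) (mod 3). -/
namespace WttAux
open Finset

/-- number of entries of `T` exceeding `c` (column height of the diagram with rows `T`). -/
def cnt (T : List ℕ) (c : ℕ) : ℕ := ∑ r ∈ Finset.range T.length, if c < T.getD r 0 then 1 else 0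

lemma cnt_eq (T : List ℕ) (c n : ℕ) (h : T.length ≤ n) :
    (∑ r ∈ Finset.range n, if c < T.getD r 0 then 1 else 0) = cnt T c := by
  rw [cnt]
  symm
  apply Finset.sum_subset (Finset.range_subset_range.2 h)
  intro x _ hx
  simp only [Finset.mem_range, not_lt] at hx
  rw [List.getD_eq_default _ _ hx]
  simp

lemma getD_concat_lt (T : List ℕ) (m r : ℕ) (h : r < T.length) :
    (T ++ [m]).getD r 0 = T.getD r 0 := by
  rw [List.getD_eq_getElem _ _ (by simp only [List.length_append, List.length_singleton]; omega),
    List.getD_eq_getElem _ _ h]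
  exact List.getElem_append_left h

lemma getD_concat_self (T : List ℕ) (m : ℕ) : (T ++ [m]).getD T.length 0 = m := by
  rw [List.getD_eq_getElem _ _ (by simp)]
  simp

lemma getD_concat_gt (T : List ℕ) (m r : ℕ) (h : T.length < r) : (T ++ [m]).getD r 0 = 0 := by
  apply List.getD_eq_default
  simp only [List.length_append, List.length_singleton]
  omega

lemma cnt_concat (T : List ℕ) (m c : ℕ) :
    cnt (T ++ [m]) c = cnt T c + if c < m then 1 else 0 := by
  rw [cnt, List.length_append, List.length_singleton, Finset.sum_range_succ, getD_concat_self]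
  congr 1
  rw [Finset.sum_congr rfl fun r hr => by
    rw [getD_concat_lt T m r (Finset.mem_range.1 hr)]]
  rw [cnt]

lemma cnt_full (T : List ℕ) (c : ℕ) (h : ∀ x ∈ T, c < x) : cnt T c = T.length := by
  rw [cnt]
  rw [Finset.sum_congr rfl fun r hr => if_pos (h _ (by
    rw [List.getD_eq_getElem _ _ (Finset.mem_range.1 hr)]
    exact List.getElem_mem _))]
  simp

/-- The key counting identity. -/
lemma key (j : ℕ) (T : List ℕ) (hsort : T.Pairwise (· ≥ ·)) (hlen : T.length ≤ j + 1)
    (hbd : ∀ x ∈ T, x ≤ j) :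
    (∑ r ∈ Finset.range (j+1), if (T.getD r 0 + r) % 3 = (j+1) % 3 then 1 else 0)
      = ∑ c ∈ Finset.range j, if (cnt T c + c) % 3 = (j+1) % 3 then 1 else 0 := by
  suffices H : ∀ n (T : List ℕ), T.sum + T.length = n → T.Pairwise (· ≥ ·) → T.length ≤ j + 1 →
      (∀ x ∈ T, x ≤ j) →
      (∑ r ∈ Finset.range (j+1), if (T.getD r 0 + r) % 3 = (j+1) % 3 then 1 else 0)
        = ∑ c ∈ Finset.range j, if (cnt T c + c) % 3 = (j+1) % 3 then 1 else 0 by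
    exact H _ T rfl hsort hlen hbd
  intro n
  induction n using Nat.strong_induction_on with
  | _ n ih =>
    intro T hn hsort hlen hbd
    rcases T.eq_nil_or_concat with rfl | ⟨T₀, m, hTc⟩
    · -- base case
      simp only [List.getD_nil, Nat.zero_add, cnt, List.length_nil, Finset.range_zero,
        Finset.sum_empty]
      rw [Finset.sum_range_succ, if_neg (by omega)]
      simp
    · rw [List.concat_eq_append] at hTc
      subst hTc
      -- step: T = T₀ ++ [m]
      have hT0len : T₀.length ≤ j := by
        simp only [List.length_append, List.length_singleton] at hlen; omega
      have hmj : m ≤ j := hbd m (by simp)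
      obtain ⟨hs0, -, hge⟩ := List.pairwise_append.1 hsort
      have hge' : ∀ x ∈ T₀, m ≤ x := fun x hx => hge x hx m (by simp)
      rcases Nat.eq_zero_or_pos m with rfl | hm
      · -- m = 0 : drop it, all counted quantities unchanged
        have e1 : ∀ r, (T₀ ++ [0]).getD r 0 = T₀.getD r 0 := by
          intro r
          rcases lt_trichotomy r T₀.length with h | rfl | h
          · exact getD_concat_lt _ _ _ h
          · rw [getD_concat_self, List.getD_eq_default _ _ le_rfl]
          · rw [getD_concat_gt _ _ _ h, List.getD_eq_default _ _ (by omega)]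
        have e2 : ∀ c, cnt (T₀ ++ [0]) c = cnt T₀ c := by
          intro c; rw [cnt_concat, if_neg (by omega), Nat.add_zero]
        have e1' : (∑ r ∈ Finset.range (j+1),
              if ((T₀ ++ [0]).getD r 0 + r) % 3 = (j+1) % 3 then 1 else 0)
            = ∑ r ∈ Finset.range (j+1), if (T₀.getD r 0 + r) % 3 = (j+1) % 3 then 1 else 0 :=
          Finset.sum_congr rfl fun r _ => by rw [e1]
        have e2' : (∑ c ∈ Finset.range j,
              if (cnt (T₀ ++ [0]) c + c) % 3 = (j+1) % 3 then 1 else 0)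
            = ∑ c ∈ Finset.range j, if (cnt T₀ c + c) % 3 = (j+1) % 3 then 1 else 0 :=
          Finset.sum_congr rfl fun c _ => by rw [e2]
        rw [e1', e2']
        apply ih (T₀.sum + T₀.length) (by
          simp only [List.sum_append, List.length_append, List.sum_cons, List.sum_nil,
            List.length_singleton] at hn ⊢
          omega) T₀ rfl hs0 (by omega) (fun x hx => hbd x (by simp [hx]))
      · -- m ≥ 1 : decrement the last entry
        obtain ⟨m', rfl⟩ : ∃ m', m = m' + 1 := ⟨m - 1, by omega⟩
        have hScnt : ∀ c, c ≠ m' → cnt (T₀ ++ [m' + 1]) c = cnt (T₀ ++ [m']) c := by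
          intro c hc
          rw [cnt_concat, cnt_concat]
          congr 1
          split_ifs with h1 h2 h2 <;> omega
        have hSget : ∀ r, r ≠ T₀.length →
            (T₀ ++ [m' + 1]).getD r 0 = (T₀ ++ [m']).getD r 0 := by
          intro r hr
          rcases lt_trichotomy r T₀.length with h | rfl | h
          · rw [getD_concat_lt _ _ _ h, getD_concat_lt _ _ _ h]
          · omega
          · rw [getD_concat_gt _ _ _ h, getD_concat_gt _ _ _ h]
        have hcnt0 : cnt T₀ m' = T₀.length := cnt_full _ _ fun x hx => by
          have := hge' x hx; omega
        have hr0mem : T₀.length ∈ Finset.range (j + 1) := Finset.mem_range.2 (by omega)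
        have hm'mem : m' ∈ Finset.range j := Finset.mem_range.2 (by omega)
        have vA : (T₀ ++ [m' + 1]).getD T₀.length 0 = m' + 1 := getD_concat_self _ _
        have vB : (T₀ ++ [m']).getD T₀.length 0 = m' := getD_concat_self _ _
        have vC : cnt (T₀ ++ [m' + 1]) m' = T₀.length + 1 := by
          rw [cnt_concat, hcnt0, if_pos (by omega)]
        have vD : cnt (T₀ ++ [m']) m' = T₀.length := by
          rw [cnt_concat, hcnt0, if_neg (by omega), Nat.add_zero]
        -- split off the changed row term on both lists
        have L1 : (∑ r ∈ (Finset.range (j+1)).erase T₀.length,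
              if ((T₀ ++ [m'+1]).getD r 0 + r) % 3 = (j+1) % 3 then 1 else 0)
            + (if ((T₀ ++ [m'+1]).getD T₀.length 0 + T₀.length) % 3 = (j+1) % 3 then 1 else 0)
            = ∑ r ∈ Finset.range (j+1),
              if ((T₀ ++ [m'+1]).getD r 0 + r) % 3 = (j+1) % 3 then 1 else 0 :=
          Finset.sum_erase_add _ _ hr0mem
        have L2 : (∑ r ∈ (Finset.range (j+1)).erase T₀.length,
              if ((T₀ ++ [m']).getD r 0 + r) % 3 = (j+1) % 3 then 1 else 0)
            + (if ((T₀ ++ [m']).getD T₀.length 0 + T₀.length) % 3 = (j+1) % 3 then 1 else 0)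
            = ∑ r ∈ Finset.range (j+1),
              if ((T₀ ++ [m']).getD r 0 + r) % 3 = (j+1) % 3 then 1 else 0 :=
          Finset.sum_erase_add _ _ hr0mem
        have Lerase : (∑ r ∈ (Finset.range (j+1)).erase T₀.length,
              if ((T₀ ++ [m'+1]).getD r 0 + r) % 3 = (j+1) % 3 then 1 else 0)
            = ∑ r ∈ (Finset.range (j+1)).erase T₀.length,
              if ((T₀ ++ [m']).getD r 0 + r) % 3 = (j+1) % 3 then 1 else 0 :=
          Finset.sum_congr rfl fun r hr => by
            rw [hSget r (Finset.ne_of_mem_erase hr)]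
        -- split off the changed column term on both lists
        have R1 : (∑ c ∈ (Finset.range j).erase m',
              if (cnt (T₀ ++ [m'+1]) c + c) % 3 = (j+1) % 3 then 1 else 0)
            + (if (cnt (T₀ ++ [m'+1]) m' + m') % 3 = (j+1) % 3 then 1 else 0)
            = ∑ c ∈ Finset.range j,
              if (cnt (T₀ ++ [m'+1]) c + c) % 3 = (j+1) % 3 then 1 else 0 :=
          Finset.sum_erase_add _ _ hm'mem
        have R2 : (∑ c ∈ (Finset.range j).erase m',
              if (cnt (T₀ ++ [m']) c + c) % 3 = (j+1) % 3 then 1 else 0)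
            + (if (cnt (T₀ ++ [m']) m' + m') % 3 = (j+1) % 3 then 1 else 0)
            = ∑ c ∈ Finset.range j,
              if (cnt (T₀ ++ [m']) c + c) % 3 = (j+1) % 3 then 1 else 0 :=
          Finset.sum_erase_add _ _ hm'mem
        have Rerase : (∑ c ∈ (Finset.range j).erase m',
              if (cnt (T₀ ++ [m'+1]) c + c) % 3 = (j+1) % 3 then 1 else 0)
            = ∑ c ∈ (Finset.range j).erase m',
              if (cnt (T₀ ++ [m']) c + c) % 3 = (j+1) % 3 then 1 else 0 :=
          Finset.sum_congr rfl fun c hc => by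
            rw [hScnt c (Finset.ne_of_mem_erase hc)]
        -- induction hypothesis for T₀ ++ [m']
        have hIH : (∑ r ∈ Finset.range (j+1),
              if ((T₀ ++ [m']).getD r 0 + r) % 3 = (j+1) % 3 then 1 else 0)
            = ∑ c ∈ Finset.range j,
              if (cnt (T₀ ++ [m']) c + c) % 3 = (j+1) % 3 then 1 else 0 := by
          apply ih ((T₀ ++ [m']).sum + (T₀ ++ [m']).length) (by
            simp only [List.sum_append, List.length_append, List.sum_cons, List.sum_nil,
              List.length_singleton] at hn ⊢
            omega) _ rfl
          · exact List.pairwise_append.2 ⟨hs0, List.pairwise_singleton _ _,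
              fun x hx y hy => by
                simp only [List.mem_singleton] at hy
                subst hy
                have := hge' x hx; omega⟩
          · simp only [List.length_append, List.length_singleton]; omega
          · intro x hx
            simp only [List.mem_append, List.mem_singleton] at hx
            rcases hx with hx | rfl
            · exact hbd x (by simp [hx])
            · omega
        rw [vA] at L1
        rw [vB] at L2
        rw [vC] at R1
        rw [vD] at R2
        rw [← L1, ← R1, Lerase, Rerase]
        rw [← L2, ← R2] at hIH
        have hsame : (if (m' + 1 + T₀.length) % 3 = (j+1) % 3 then 1 else 0)
            = (if (T₀.length + 1 + m') % 3 = (j+1) % 3 then (1:ℕ) else 0) := by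
          split_ifs with h1 h2 <;> omega
        have hsame2 : (if (m' + T₀.length) % 3 = (j+1) % 3 then 1 else 0)
            = (if (T₀.length + m') % 3 = (j+1) % 3 then (1:ℕ) else 0) := by
          split_ifs with h1 h2 <;> omega
        omega

end WttAux

namespace YDPartition

lemma row_anti (p : YDPartition) {r r' : ℕ} (h : r ≤ r') : p.row r' ≤ p.row r := by
  rw [row, row]
  by_cases h' : r' < p.rows.length
  · rw [List.getD_eq_getElem _ _ h', List.getD_eq_getElem _ _ (lt_of_le_of_lt h h')]
    rcases eq_or_lt_of_le h with rfl | hlt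
    · exact le_rfl
    · exact List.pairwise_iff_getElem.1 p.sorted r r' _ _ hlt
  · rw [List.getD_eq_default _ _ (not_lt.1 h')]
    exact Nat.zero_le _

lemma row_le_rowLen (p : YDPartition) (r : ℕ) : p.row r ≤ p.rowLen :=
  p.row_anti (Nat.zero_le r)

lemma row_eq_zero (p : YDPartition) {r : ℕ} (h : p.colHeight ≤ r) : p.row r = 0 :=
  List.getD_eq_default _ _ h

lemma lt_colH_iff (p : YDPartition) {r : ℕ} (c : ℕ) (hr : r < p.colHeight) :
    c < p.row r ↔ r < p.colH c := by
  constructor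
  · intro hc
    have hsub : Finset.range (r+1) ⊆ (Finset.range p.colHeight).filter (fun i => c < p.row i) := by
      intro i hi
      simp only [Finset.mem_range] at hi
      simp only [Finset.mem_filter, Finset.mem_range]
      exact ⟨by omega, lt_of_lt_of_le hc (p.row_anti (by omega))⟩
    have := Finset.card_le_card hsub
    rw [Finset.card_range] at this
    rw [colH]
    omega
  · intro hcol
    by_contra hc
    push_neg at hc
    have hsub : (Finset.range p.colHeight).filter (fun i => c < p.row i) ⊆ Finset.range r := by
      intro i hi
      simp only [Finset.mem_filter, Finset.mem_range] at hi ⊢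
      by_contra hir
      push_neg at hir
      exact absurd hi.2 (not_lt.2 (le_trans (p.row_anti hir) hc))
    have := Finset.card_le_card hsub
    rw [Finset.card_range] at this
    rw [colH] at hcol
    omega

lemma colH_le (p : YDPartition) (c : ℕ) : p.colH c ≤ p.colHeight := by
  rw [colH]
  exact (Finset.card_filter_le _ _).trans (by rw [Finset.card_range])

lemma arm_succ (p : YDPartition) {r c : ℕ} (hr : r < p.colHeight) (hc : c < p.row r) :
    p.arm r c + 1 = p.colH c - r := by
  have h1 : ((Finset.Ioo r p.colHeight).filter (fun r' => c < p.row r'))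
      = Finset.Ioo r (p.colH c) := by
    ext i
    simp only [Finset.mem_filter, Finset.mem_Ioo]
    constructor
    · rintro ⟨⟨h1, h2⟩, h3⟩
      exact ⟨h1, (p.lt_colH_iff c h2).1 h3⟩
    · rintro ⟨h1, h2⟩
      have hik : i < p.colHeight := lt_of_lt_of_le h2 (p.colH_le c)
      exact ⟨⟨h1, hik⟩, (p.lt_colH_iff c hik).2 h2⟩
  have h2 : r < p.colH c := (p.lt_colH_iff c hr).1 hc
  rw [arm, h1, Nat.card_Ioo]
  omega

lemma wtt_sum (p : YDPartition) :
    p.wtt = ∑ r ∈ Finset.range p.colHeight, ∑ c ∈ Finset.range (p.row r),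
      if (p.colH c - r) % 3 = (p.row r - 1 - c) % 3 then 1 else 0 := by
  rw [wtt, cells, Finset.filter_filter, Finset.card_filter, Finset.sum_product]
  refine Finset.sum_congr rfl fun r hr => ?_
  simp only [Finset.mem_range] at hr
  have hrange : Finset.range (p.row r) = (Finset.range p.rowLen).filter (· < p.row r) := by
    ext x
    simp only [Finset.mem_range, Finset.mem_filter]
    have := p.row_le_rowLen r
    constructor
    · intro h; exact ⟨by omega, h⟩
    · exact fun h => h.2
  rw [hrange, Finset.sum_filter]
  refine Finset.sum_congr rfl fun c _ => ?_
  by_cases hc : c < p.row r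
  · rw [if_pos hc]
    have harm := p.arm_succ hr hc
    have hcond : ((p.arm r c + 1) % 3 = p.leg r c % 3)
        = ((p.colH c - r) % 3 = (p.row r - 1 - c) % 3) := by
      rw [harm, leg]
    simp only [hc, true_and, hcond]
  · simp only [hc, false_and, if_false, if_neg hc]

end YDPartition

open YDPartition in
/-- if `ρ₁λ` is defined then `w̃t(ρ₁λ) = w̃t(λ)`. -/
theorem wtt_rho1 (p q : YDPartition) (h : rho1? p = some q) : q.wtt = p.wtt := by
  rw [rho1?] at h
  split at h
  case isFalse => exact absurd h (by simp)
  case isTrue hcond =>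
  obtain ⟨hk2, _⟩ := hcond
  have hq : q.rows = rho1Rows p := by cases h; rfl
  set j := p.rowLen with hj
  set T := p.rows.tail with hT
  -- basic facts
  have hTlen : T.length = p.colHeight - 1 := by rw [hT, List.length_tail]; rfl
  have hTlen' : T.length ≤ j + 1 := by
    rw [hTlen]; rw [colHeight] at hk2 ⊢; omega
  have hTsort : T.Pairwise (· ≥ ·) := List.Pairwise.sublist (List.tail_sublist _) p.sorted
  have hprow : ∀ r : ℕ, p.row (r + 1) = T.getD r 0 := by
    intro r
    rw [row, hT]
    rcases p.rows with _ | ⟨a, t⟩ <;> rfl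
  have hTbd : ∀ x ∈ T, x ≤ j := by
    intro x hx
    rw [hT] at hx
    have hs := p.sorted
    have hjj : p.rows.getD 0 0 = j := rfl
    rcases hrows : p.rows with _ | ⟨a, t⟩
    · rw [hrows] at hx; simp at hx
    · rw [hrows] at hx hs hjj
      have := (List.pairwise_cons.1 hs).1 x hx
      simp only [List.getD_cons_zero] at hjj
      omega
  have hgetTbd : ∀ r : ℕ, T.getD r 0 ≤ j := by
    intro r
    by_cases hr : r < T.length
    · rw [List.getD_eq_getElem _ _ hr]
      exact hTbd _ (List.getElem_mem _)
    · rw [List.getD_eq_default _ _ (not_lt.1 hr)]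
      exact Nat.zero_le _
  -- facts about q
  have hqch : q.colHeight = j + 1 := by
    rw [colHeight, hq, rho1Rows, List.length_map, List.length_range]
  have hqrow : ∀ r : ℕ, r < j + 1 → q.row r = T.getD r 0 + 1 := by
    intro r hr
    rw [row, hq, rho1Rows,
      List.getD_eq_getElem _ _ (by rw [List.length_map, List.length_range]; exact hr)]
    simp [hT]
  have hqcolH0 : q.colH 0 = j + 1 := by
    rw [colH, hqch, Finset.filter_true_of_mem, Finset.card_range]
    intro r hr
    rw [hqrow r (Finset.mem_range.1 hr)]
    omega
  have hqcolHsucc : ∀ c : ℕ, q.colH (c + 1) = WttAux.cnt T c := by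
    intro c
    rw [colH, hqch, Finset.card_filter]
    rw [Finset.sum_congr rfl fun r hr => ?_]
    · exact WttAux.cnt_eq T c (j+1) hTlen'
    · rw [hqrow r (Finset.mem_range.1 hr)]
      simp only [Nat.add_lt_add_iff_right]
  have hpcolH : ∀ c : ℕ, c < j → p.colH c = WttAux.cnt T c + 1 := by
    intro c hc
    have hk1 : 1 ≤ p.colHeight := by
      rcases Nat.eq_zero_or_pos p.colHeight with h0 | h0
      · exfalso
        rw [colHeight, List.length_eq_zero_iff] at h0
        have : j = 0 := by rw [hj, rowLen, row, h0]; rfl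
        omega
      · exact h0
    obtain ⟨k', hk'⟩ : ∃ k', p.colHeight = k' + 1 := ⟨p.colHeight - 1, by omega⟩
    rw [colH, Finset.card_filter, hk', Finset.sum_range_succ']
    have h0 : (if c < p.row 0 then 1 else 0) = 1 := if_pos (by rw [hj, rowLen] at hc; exact hc)
    rw [h0]
    congr 1
    rw [Finset.sum_congr rfl fun r _ => by rw [hprow r]]
    exact WttAux.cnt_eq T c k' (by rw [hTlen, hk']; omega)
  -- decompose wtt p
  have EP : p.wtt = (∑ c ∈ Finset.range j,
        if (p.colH c) % 3 = (j - 1 - c) % 3 then 1 else 0)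
      + ∑ r ∈ Finset.range (j + 1), ∑ c ∈ Finset.range (T.getD r 0),
        if (p.colH c - (r + 1)) % 3 = (T.getD r 0 - 1 - c) % 3 then 1 else 0 := by
    rw [wtt_sum]
    have h1 : (∑ r ∈ Finset.range p.colHeight, ∑ c ∈ Finset.range (p.row r),
          if (p.colH c - r) % 3 = (p.row r - 1 - c) % 3 then 1 else 0)
        = ∑ r ∈ Finset.range (j + 2), ∑ c ∈ Finset.range (p.row r),
          if (p.colH c - r) % 3 = (p.row r - 1 - c) % 3 then 1 else 0 := by
      apply Finset.sum_subset (Finset.range_subset_range.2 (by rw [colHeight] at hk2; exact hk2))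
      intro s _ hs
      simp only [Finset.mem_range, not_lt] at hs
      have : p.row s = 0 := p.row_eq_zero hs
      rw [this]
      simp
    rw [h1, Finset.sum_range_succ', Nat.add_comm]
    congr 1
    refine Finset.sum_congr rfl fun r _ => ?_
    rw [hprow r]
  -- decompose wtt q
  have EQ : q.wtt = (∑ r ∈ Finset.range (j + 1), ∑ c ∈ Finset.range (T.getD r 0),
        if (p.colH c - (r + 1)) % 3 = (T.getD r 0 - 1 - c) % 3 then 1 else 0)
      + ∑ r ∈ Finset.range (j + 1),
        if (T.getD r 0 + r) % 3 = (j + 1) % 3 then 1 else 0 := by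
    rw [wtt_sum, hqch, ← Finset.sum_add_distrib]
    refine Finset.sum_congr rfl fun r hr => ?_
    simp only [Finset.mem_range] at hr
    rw [hqrow r hr, Finset.sum_range_succ']
    congr 1
    · -- inner boxes: columns c+1 of q match columns c of row r+1 of p
      refine Finset.sum_congr rfl fun c hc => ?_
      simp only [Finset.mem_range] at hc
      have hcj : c < j := lt_of_lt_of_le hc (hgetTbd r)
      rw [hqcolHsucc c, hpcolH c hcj]
      split_ifs with h1 h2 <;> omega
    · -- the new first column of q
      rw [hqcolH0]
      split_ifs with h1 h2 <;> omega
  have EG0 : (∑ c ∈ Finset.range j, if (p.colH c) % 3 = (j - 1 - c) % 3 then 1 else 0)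
      = ∑ c ∈ Finset.range j, if (WttAux.cnt T c + c) % 3 = (j + 1) % 3 then 1 else 0 := by
    refine Finset.sum_congr rfl fun c hc => ?_
    simp only [Finset.mem_range] at hc
    rw [hpcolH c hc]
    split_ifs with h1 h2 <;> omega
  have hkey := WttAux.key j T hTsort hTlen' hTbd
  omega
end

section
/- If λ is a partition for which ψ₂λ is defined, then w̃t(ψ₂λ) = w̃t(λ) + 1, where w̃t(μ) is the number of boxes □ ∈ μ with a(□) + 1 ≡ l(□) (mod 3). -/
/-- A partition, represented as its Young diagram: the weakly decreasing list of
(positive) row lengths, row `0` being the bottom (longest) row. -/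
structure YPartition where
  rows : List ℕ
  sorted : rows.Pairwise (· ≥ ·)
  pos : ∀ x ∈ rows, 0 < x

namespace YPartition

/-- The number of boxes of the diagram. -/
def size (p : YPartition) : ℕ := p.rows.sum

/-- The length of row `i` (zero for rows above the diagram). -/
def row (p : YPartition) (i : ℕ) : ℕ := p.rows.getD i 0

/-- The height `k` of the first column, i.e. the number of rows. -/
def colHeight (p : YPartition) : ℕ := p.rows.length

/-- The length `j` of the first (bottom) row. -/
def rowLen (p : YPartition) : ℕ := p.row 0

/-- The height of column `c` (columns indexed from `0`). -/
def colH (p : YPartition) (c : ℕ) : ℕ :=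
  ((Finset.range p.colHeight).filter (fun r => c < p.row r)).card

/-- The arm of the box in row `r` and column `c`: the number of boxes strictly
above it in its column. -/
def arm (p : YPartition) (r c : ℕ) : ℕ :=
  ((Finset.Ioo r p.colHeight).filter (fun r' => c < p.row r')).card

/-- The leg of the box in row `r` and column `c`: the number of boxes strictly
to its right in its row. -/
def leg (p : YPartition) (r c : ℕ) : ℕ := p.row r - 1 - c

/-- The boxes of the diagram, as (row, column) pairs. -/
def cells (p : YPartition) : Finset (ℕ × ℕ) :=
  (Finset.range p.colHeight ×ˢ Finset.range p.rowLen).filter (fun b => b.2 < p.row b.1)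

/-- `w̃t(λ) = #{□ ∈ λ : a(□) + 1 ≡ l(□) (mod 3)}`. -/
def wtt (p : YPartition) : ℕ :=
  (p.cells.filter (fun b => (p.arm b.1 b.2 + 1) % 3 = p.leg b.1 b.2 % 3)).card

/-- `wt(λ) = #{□ ∈ λ : l(□) > 1 and a(□) + 1 ≡ l(□) (mod 3)}`. -/
def wt (p : YPartition) : ℕ :=
  (p.cells.filter (fun b => 1 < p.leg b.1 b.2 ∧ (p.arm b.1 b.2 + 1) % 3 = p.leg b.1 b.2 % 3)).card

/-- A list of naturals is (the row list of) a well-defined Young diagram iff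
it is weakly decreasing with positive entries. -/
def IsYD (l : List ℕ) : Prop := l.Pairwise (· ≥ ·) ∧ ∀ x ∈ l, 0 < x

instance (l : List ℕ) : Decidable (IsYD l) := by unfold IsYD; exact inferInstance

/-- The empty partition. -/
def emptyP : YPartition := ⟨[], List.Pairwise.nil, by simp⟩

/-- The row list of `ρ₁λ`: remove the first row (length `j`), add one box to it,
and insert the resulting `j + 1` boxes as a new first column. -/
def rho1Rows (p : YPartition) : List ℕ :=
  (List.range (p.rowLen + 1)).map
    (fun i => p.rows.tail.getD i 0 + 1)

/-- The row list of `ψ₂λ`: remove the first column (height `k`), add two boxes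
to it, and insert the resulting `k + 2` boxes as a new first row. -/
def psi2Rows (p : YPartition) : List ℕ :=
  (p.colHeight + 2) :: (p.rows.map (· - 1)).filter (fun x => decide (0 < x))

/-- `ρ₁`, as a partially defined map: defined exactly when the new first column
(height `j + 1`) is at least as high as the rest of the diagram (height `k - 1`),
i.e. when `j ≥ k - 2`. -/
def rho1? (p : YPartition) : Option YPartition :=
  if h : p.colHeight ≤ p.rowLen + 2 ∧ IsYD (rho1Rows p)
  then some ⟨rho1Rows p, h.2.1, h.2.2⟩ else none

/-- `ψ₂`, as a partially defined map: defined exactly when the result is a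
well-defined Young diagram, i.e. when `j ≤ k + 3`. -/
def psi2? (p : YPartition) : Option YPartition :=
  if h : IsYD (psi2Rows p) then some ⟨psi2Rows p, h.1, h.2⟩ else none

/-- Apply `ρ₁` (for `a = 1`) or `ψ₂` (for `a = 2`). -/
def step (a : ℕ) (p : YPartition) : Option YPartition :=
  if a = 1 then rho1? p else psi2? p

/-- Apply a `{1,2}`-word to the empty partition, the leftmost entry being the
first map applied. -/
def applyWord (w : List ℕ) : Option YPartition :=
  w.foldlM (fun p a => step a p) emptyP

end YPartition


section Aux

namespace PartitionAux

lemma getD_all_zero {l : List ℕ} (h : ∀ x ∈ l, x = 0) (i : ℕ) : l.getD i 0 = 0 := by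
  rcases Nat.lt_or_ge i l.length with hi | hi
  · rw [List.getD_eq_getElem _ _ hi]; exact h _ (List.getElem_mem _)
  · rw [List.getD_eq_default _ _ hi]

lemma getD_filter_pos (l : List ℕ) (hs : l.Pairwise (· ≥ ·)) (i : ℕ) :
    (l.filter (fun x => decide (0 < x))).getD i 0 = l.getD i 0 := by
  induction l generalizing i with
  | nil => rfl
  | cons a t ih =>
    rw [List.pairwise_cons] at hs
    by_cases h0 : 0 < a
    · rw [List.filter_cons_of_pos (by simpa using h0)]
      cases i with
      | zero => rfl
      | succ i => simpa using ih hs.2 i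
    · have ha : a = 0 := by omega
      have hz : ∀ x ∈ a :: t, x = 0 := by
        intro x hx
        rcases List.mem_cons.1 hx with rfl | hx
        · exact ha
        · have := hs.1 x hx; omega
      have : (a :: t).filter (fun x => decide (0 < x)) = [] := by
        rw [List.filter_eq_nil_iff]
        intro x hx
        simpa using Nat.le_of_eq (hz x hx)
      rw [this, getD_all_zero hz]
      simp

lemma getD_map_sub1 (l : List ℕ) (i : ℕ) : (l.map (· - 1)).getD i 0 = l.getD i 0 - 1 := by
  rcases Nat.lt_or_ge i l.length with hi | hi
  · rw [List.getD_eq_getElem _ _ (by simpa using hi), List.getD_eq_getElem _ _ hi]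
    simp
  · rw [List.getD_eq_default _ _ (by simpa using hi), List.getD_eq_default _ _ hi]

end PartitionAux

namespace YPartition

open PartitionAux

lemma row_mono (p : YPartition) {i j : ℕ} (h : i ≤ j) : p.row j ≤ p.row i := by
  unfold row
  rcases Nat.lt_or_ge j p.rows.length with hj | hj
  · have hi : i < p.rows.length := lt_of_le_of_lt h hj
    rw [List.getD_eq_getElem _ _ hj, List.getD_eq_getElem _ _ hi]
    rcases Nat.eq_or_lt_of_le h with rfl | h'
    · exact le_refl _
    · exact p.sorted.rel_get_of_lt (a := ⟨i, hi⟩) (b := ⟨j, hj⟩) h'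
  · rw [List.getD_eq_default _ _ hj]; exact Nat.zero_le _

lemma row_pos_iff (p : YPartition) (r : ℕ) : 0 < p.row r ↔ r < p.colHeight := by
  unfold row colHeight
  rcases Nat.lt_or_ge r p.rows.length with hr | hr
  · rw [List.getD_eq_getElem _ _ hr]
    exact ⟨fun _ => hr, fun _ => p.pos _ (List.getElem_mem _)⟩
  · rw [List.getD_eq_default _ _ hr]
    exact ⟨fun h => absurd h (by omega), fun h => absurd h (by omega)⟩

lemma row_eq_zero (p : YPartition) {r : ℕ} (h : p.colHeight ≤ r) : p.row r = 0 := by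
  have := p.row_pos_iff r; omega

lemma lt_colH_iff (p : YPartition) (r c : ℕ) : r < p.colH c ↔ c < p.row r := by
  constructor
  · intro h
    by_contra hc
    push_neg at hc
    have hsub : (Finset.range p.colHeight).filter (fun r' => c < p.row r') ⊆ Finset.range r := by
      intro r' hr'
      simp only [Finset.mem_filter, Finset.mem_range] at hr' ⊢
      by_contra hge
      push_neg at hge
      have := p.row_mono hge
      omega
    have := Finset.card_le_card hsub
    rw [Finset.card_range] at this
    unfold colH at h
    omega
  · intro h
    have hrk : r < p.colHeight := (p.row_pos_iff r).1 (by omega)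
    have hsub : Finset.range (r + 1) ⊆
        (Finset.range p.colHeight).filter (fun r' => c < p.row r') := by
      intro r' hr'
      simp only [Finset.mem_range] at hr'
      simp only [Finset.mem_filter, Finset.mem_range]
      have := p.row_mono (show r' ≤ r by omega)
      exact ⟨by omega, by omega⟩
    have := Finset.card_le_card hsub
    rw [Finset.card_range] at this
    unfold colH
    omega

lemma colH_anti (p : YPartition) {c c' : ℕ} (h : c ≤ c') : p.colH c' ≤ p.colH c := by
  apply Finset.card_le_card
  intro r hr
  simp only [Finset.mem_filter, Finset.mem_range] at hr ⊢
  exact ⟨hr.1, by omega⟩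

lemma colH_le (p : YPartition) (c : ℕ) : p.colH c ≤ p.colHeight := by
  refine le_trans (Finset.card_filter_le _ _) ?_
  rw [Finset.card_range]

lemma mem_cells (p : YPartition) (b : ℕ × ℕ) :
    b ∈ p.cells ↔ b.1 < p.colHeight ∧ b.2 < p.row b.1 := by
  unfold cells
  simp only [Finset.mem_filter, Finset.mem_product, Finset.mem_range]
  constructor
  · rintro ⟨⟨h1, _⟩, h3⟩; exact ⟨h1, h3⟩
  · rintro ⟨h1, h2⟩
    have : p.row b.1 ≤ p.rowLen := p.row_mono (Nat.zero_le _)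
    exact ⟨⟨h1, by omega⟩, h2⟩

/-- Change the upper bound in the `arm` filter. -/
lemma arm_ext (p : YPartition) (r c N : ℕ) (hN : p.colHeight ≤ N) :
    p.arm r c = ((Finset.Ioo r N).filter (fun r' => c < p.row r')).card := by
  unfold arm
  congr 1
  ext r'
  simp only [Finset.mem_filter, Finset.mem_Ioo]
  constructor
  · rintro ⟨⟨h1, h2⟩, h3⟩; exact ⟨⟨h1, by omega⟩, h3⟩
  · rintro ⟨⟨h1, h2⟩, h3⟩
    have := (p.row_pos_iff r').1 (by omega)
    exact ⟨⟨h1, this⟩, h3⟩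

lemma armp0 (p : YPartition) {r : ℕ} (hr : r < p.colHeight) :
    p.arm r 0 = p.colHeight - 1 - r := by
  unfold arm
  have heq : (Finset.Ioo r p.colHeight).filter (fun r' => 0 < p.row r') =
      Finset.Ioo r p.colHeight := by
    apply Finset.filter_true_of_mem
    intro r' hr'
    simp only [Finset.mem_Ioo] at hr'
    exact (p.row_pos_iff r').2 hr'.2
  rw [heq, Nat.card_Ioo]
  omega

end YPartition

/-- Shift a filtered-interval cardinality by one. -/
lemma shift_card (a b : ℕ) (P : ℕ → Prop) [DecidablePred P] :
    ((Finset.Ico (a+1) (b+1)).filter P).card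
      = ((Finset.Ico a b).filter (fun x => P (x+1))).card := by
  apply Finset.card_nbij' (fun x => x - 1) (fun x => x + 1)
  · intro x hx
    simp only [Finset.mem_coe, Finset.mem_filter, Finset.mem_Ico] at hx ⊢
    obtain ⟨⟨h1, h2⟩, h3⟩ := hx
    have : x - 1 + 1 = x := by omega
    rw [this]
    exact ⟨⟨by omega, by omega⟩, h3⟩
  · intro x hx
    simp only [Finset.mem_coe, Finset.mem_filter, Finset.mem_Ico] at hx ⊢
    exact ⟨⟨by omega, by omega⟩, hx.2⟩
  · intro x hx
    simp only [Finset.mem_coe, Finset.mem_filter, Finset.mem_Ico] at hx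
    dsimp only
    omega
  · intro x hx
    dsimp only
    omega

lemma Fstep (k s : ℕ) :
    (s + 1 + 2*k + 1) / 3 = (s + 2*k + 1) / 3 + (if s % 3 = (k+1) % 3 then 1 else 0) := by
  split <;> omega

lemma S1 (k d : ℕ) {a b : ℕ} (hab : a ≤ b) :
    (d + b + 2*k + 1) / 3 = (d + a + 2*k + 1) / 3 +
      ((Finset.Ico a b).filter (fun r => (d + r) % 3 = (k+1) % 3)).card := by
  induction b, hab using Nat.le_induction with
  | base => simp
  | succ b hab ih =>
    rw [Nat.Ico_succ_right_eq_insert_Ico hab, Finset.filter_insert]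
    have hnm : b ∉ (Finset.Ico a b).filter (fun r => (d + r) % 3 = (k+1) % 3) := by
      simp [Finset.mem_Ico]
    have h1 := Fstep k (d + b)
    by_cases hb : (d + b) % 3 = (k+1) % 3
    · rw [if_pos hb, Finset.card_insert_of_notMem hnm]
      rw [if_pos hb] at h1
      omega
    · rw [if_neg hb]
      rw [if_neg hb] at h1
      omega

lemma key_count (p : YPartition) (hj : p.rowLen ≤ p.colHeight + 3) :
    ((Finset.range (p.colHeight + 2)).filter
        (fun c => (p.colH (c+1) + c + 1) % 3 = (p.colHeight + 1) % 3)).card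
      = ((Finset.range p.colHeight).filter
        (fun r => (p.row r + r) % 3 = (p.colHeight + 1) % 3)).card + 1 := by
  set k := p.colHeight with hk
  -- cover of `range k` by the column fibers
  have hcover : Finset.range k
      = (Finset.range (k+3)).biUnion (fun e => Finset.Ico (p.colH (e+1)) (p.colH e)) := by
    ext r
    simp only [Finset.mem_biUnion, Finset.mem_Ico, Finset.mem_range]
    constructor
    · intro hr
      have hpos : 0 < p.row r := (p.row_pos_iff r).2 hr
      have hle : p.row r ≤ p.rowLen := p.row_mono (Nat.zero_le r)
      refine ⟨p.row r - 1, by omega, ?_, ?_⟩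
      · have h1 : p.row r - 1 + 1 = p.row r := by omega
        rw [h1]
        have := p.lt_colH_iff r (p.row r)
        omega
      · have := p.lt_colH_iff r (p.row r - 1)
        omega
    · rintro ⟨e, he, h1, h2⟩
      exact lt_of_lt_of_le h2 (p.colH_le e)
  have hdisjkey : ∀ e e' : ℕ, e < e' →
      Disjoint (Finset.Ico (p.colH (e+1)) (p.colH e)) (Finset.Ico (p.colH (e'+1)) (p.colH e')) := by
    intro e e' hee
    rw [Finset.disjoint_left]
    intro x hx hx'
    simp only [Finset.mem_Ico] at hx hx'
    have := p.colH_anti (show e + 1 ≤ e' by omega)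
    omega
  have hdisj : ∀ e ∈ Finset.range (k+3), ∀ e' ∈ Finset.range (k+3), e ≠ e' →
      Disjoint ((Finset.Ico (p.colH (e+1)) (p.colH e)).filter
          (fun r => (p.row r + r) % 3 = (k + 1) % 3))
        ((Finset.Ico (p.colH (e'+1)) (p.colH e')).filter
          (fun r => (p.row r + r) % 3 = (k + 1) % 3)) := by
    intro e _ e' _ hne
    rcases Nat.lt_or_ge e e' with h | h
    · exact Finset.disjoint_filter_filter (hdisjkey e e' h)
    · have : e' < e := by omega
      exact (Finset.disjoint_filter_filter (hdisjkey e' e this)).symm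
  have hA : ((Finset.range k).filter (fun r => (p.row r + r) % 3 = (k + 1) % 3)).card
      = ∑ e ∈ Finset.range (k+3),
          ((Finset.Ico (p.colH (e+1)) (p.colH e)).filter
            (fun r => (e + 1 + r) % 3 = (k + 1) % 3)).card := by
    rw [hcover, Finset.filter_biUnion, Finset.card_biUnion hdisj]
    apply Finset.sum_congr rfl
    intro e _
    congr 1
    apply Finset.filter_congr
    intro r hr
    simp only [Finset.mem_Ico] at hr
    have h1 := p.lt_colH_iff r (e+1)
    have h2 := p.lt_colH_iff r e
    have hre : p.row r = e + 1 := by omega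
    rw [hre]
  -- telescoping on the A side
  have hAsum : ∑ e ∈ Finset.range (k+3), (e + 1 + p.colH e + 2*k + 1) / 3
      = ∑ e ∈ Finset.range (k+3), (e + 1 + p.colH (e+1) + 2*k + 1) / 3
        + ((Finset.range k).filter (fun r => (p.row r + r) % 3 = (k + 1) % 3)).card := by
    rw [hA, ← Finset.sum_add_distrib]
    apply Finset.sum_congr rfl
    intro e _
    exact S1 k (e+1) (p.colH_anti (Nat.le_succ e))
  -- the B side
  have hB : ((Finset.range (k + 2)).filter
        (fun c => (p.colH (c+1) + c + 1) % 3 = (k + 1) % 3)).card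
      = ∑ c ∈ Finset.range (k+2), (if (p.colH (c+1) + c + 1) % 3 = (k+1) % 3 then 1 else 0) :=
    Finset.card_filter _ _
  have hBsum : ∑ c ∈ Finset.range (k+2), (p.colH (c+1) + c + 1 + 1 + 2*k + 1) / 3
      = ∑ c ∈ Finset.range (k+2), (p.colH (c+1) + c + 1 + 2*k + 1) / 3
        + ((Finset.range (k + 2)).filter
            (fun c => (p.colH (c+1) + c + 1) % 3 = (k + 1) % 3)).card := by
    rw [hB, ← Finset.sum_add_distrib]
    apply Finset.sum_congr rfl
    intro c _
    exact Fstep k (p.colH (c+1) + c + 1)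
  have hsplit1 : ∑ e ∈ Finset.range (k+3), (e + 1 + p.colH e + 2*k + 1) / 3
      = (∑ c ∈ Finset.range (k+2), (p.colH (c+1) + c + 1 + 1 + 2*k + 1) / 3)
        + (1 + p.colH 0 + 2*k + 1) / 3 := by
    rw [Finset.sum_range_succ' (fun e => (e + 1 + p.colH e + 2*k + 1) / 3) (k+2)]
    congr 1
    apply Finset.sum_congr rfl
    intro c _
    congr 1
    omega
  have hsplit2 : ∑ e ∈ Finset.range (k+3), (e + 1 + p.colH (e+1) + 2*k + 1) / 3
      = (∑ c ∈ Finset.range (k+2), (p.colH (c+1) + c + 1 + 2*k + 1) / 3)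
        + (k + 3 + p.colH (k+3) + 2*k + 1) / 3 := by
    rw [Finset.sum_range_succ (fun e => (e + 1 + p.colH (e+1) + 2*k + 1) / 3) (k+2)]
    congr 1
    apply Finset.sum_congr rfl
    intro c _
    congr 1
    omega
  have hcolH0 : p.colH 0 = k := by
    have h1 : ¬ (k < p.colH 0) := by
      have := p.colH_le 0; omega
    have h2 := p.lt_colH_iff (p.colH 0) 0
    by_contra hne
    have hlt : p.colH 0 < k := by omega
    have := (p.row_pos_iff (p.colH 0)).2 (by omega)
    omega
  have hcolHtop : p.colH (k+3) = 0 := by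
    have := p.lt_colH_iff 0 (k+3)
    have : ¬ (0 < p.colH (k+3)) := by
      intro hpos
      have h2 := (p.lt_colH_iff 0 (k+3)).1 hpos
      have : p.row 0 ≤ p.colHeight + 3 := hj
      omega
    omega
  rw [hcolH0] at hsplit1
  rw [hcolHtop] at hsplit2
  omega

end Aux

open YPartition in
/-- if `ψ₂λ` is defined then `w̃t(ψ₂λ) = w̃t(λ) + 1`. -/
theorem wtt_psi2 (p q : YPartition) (h : psi2? p = some q) : q.wtt = p.wtt + 1 := by
  classical
  rw [psi2?] at h
  split_ifs at h with hyd
  injection h with h'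
  have hq : q.rows = psi2Rows p := by rw [← h']
  -- basic facts about q
  have hrow0 : q.row 0 = p.colHeight + 2 := by
    simp [YPartition.row, hq, psi2Rows]
  have hrowS : ∀ i, q.row (i+1) = p.row i - 1 := by
    intro i
    have hms : (p.rows.map (· - 1)).Pairwise (· ≥ ·) := by
      rw [List.pairwise_map]
      exact p.sorted.imp (fun hab => Nat.sub_le_sub_right hab 1)
    rw [YPartition.row, hq, psi2Rows, List.getD_cons_succ,
      PartitionAux.getD_filter_pos _ hms, PartitionAux.getD_map_sub1]
    rfl
  have hkq : q.colHeight ≤ p.colHeight + 1 := by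
    by_contra hc
    push_neg at hc
    have h1 := (q.row_pos_iff (p.colHeight + 1)).2 hc
    rw [hrowS] at h1
    have h2 := p.row_eq_zero (le_refl p.colHeight)
    omega
  have hq0 : 0 < q.colHeight := by
    rw [YPartition.colHeight, hq, psi2Rows]
    simp
  have hjk : p.rowLen ≤ p.colHeight + 3 := by
    have h1 := q.row_mono (show 0 ≤ 1 by omega)
    rw [hrow0, hrowS 0] at h1
    have h2 : p.rowLen = p.row 0 := rfl
    omega
  -- arm and leg of q in terms of p
  have harm0 : ∀ c, q.arm 0 c = p.colH (c+1) := by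
    intro c
    rw [q.arm_ext 0 c (p.colHeight + 1) hkq]
    have hIoo : Finset.Ioo 0 (p.colHeight + 1) = Finset.Ico (0+1) (p.colHeight + 1) := by
      ext x; simp only [Finset.mem_Ioo, Finset.mem_Ico]; omega
    rw [hIoo, shift_card 0 p.colHeight (fun r' => c < q.row r'), YPartition.colH,
      ← Finset.range_eq_Ico]
    congr 1
    apply Finset.filter_congr
    intro x _
    rw [hrowS x]
    omega
  have harmS : ∀ r c, q.arm (r+1) c = p.arm r (c+1) := by
    intro r c
    rw [q.arm_ext (r+1) c (p.colHeight + 1) hkq]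
    have hIoo : Finset.Ioo (r+1) (p.colHeight + 1) = Finset.Ico (r+1+1) (p.colHeight + 1) := by
      ext x; simp only [Finset.mem_Ioo, Finset.mem_Ico]; omega
    rw [hIoo, shift_card (r+1) p.colHeight (fun r' => c < q.row r'), YPartition.arm]
    have hIoo2 : Finset.Ioo r p.colHeight = Finset.Ico (r+1) p.colHeight := by
      ext x; simp only [Finset.mem_Ioo, Finset.mem_Ico]; omega
    rw [hIoo2]
    congr 1
    apply Finset.filter_congr
    intro x _
    rw [hrowS x]
    omega
  have hlegS : ∀ r c, q.leg (r+1) c = p.leg r (c+1) := by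
    intro r c
    rw [YPartition.leg, YPartition.leg, hrowS r]
    omega
  have hleg0 : ∀ c, q.leg 0 c = p.colHeight + 1 - c := by
    intro c
    rw [YPartition.leg, hrow0]
    omega
  -- split the cells of q by first row / rest
  have hsplitq := Finset.card_filter_add_card_filter_not
    (s := q.cells.filter (fun b => (q.arm b.1 b.2 + 1) % 3 = q.leg b.1 b.2 % 3))
    (fun b => b.1 = 0)
  rw [Finset.filter_filter, Finset.filter_filter] at hsplitq
  have hsplitp := Finset.card_filter_add_card_filter_not
    (s := p.cells.filter (fun b => (p.arm b.1 b.2 + 1) % 3 = p.leg b.1 b.2 % 3))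
    (fun b => b.2 = 0)
  rw [Finset.filter_filter, Finset.filter_filter] at hsplitp
  -- first row of q
  have claimB : (q.cells.filter
        (fun b => ((q.arm b.1 b.2 + 1) % 3 = q.leg b.1 b.2 % 3) ∧ b.1 = 0)).card
      = ((Finset.range (p.colHeight + 2)).filter
        (fun c => (p.colH (c+1) + c + 1) % 3 = (p.colHeight + 1) % 3)).card := by
    apply Finset.card_nbij' (fun b => b.2) (fun c => (0, c))
    · rintro ⟨r, c⟩ hb
      simp only [Finset.mem_coe, Finset.mem_filter, YPartition.mem_cells] at hb
      obtain ⟨⟨hmem1, hmem2⟩, hcond, hr0⟩ := hb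
      subst hr0
      rw [hrow0] at hmem2
      rw [harm0, hleg0] at hcond
      simp only [Finset.mem_coe, Finset.mem_filter, Finset.mem_range]
      exact ⟨hmem2, by omega⟩
    · intro c hc
      simp only [Finset.mem_coe, Finset.mem_filter, Finset.mem_range] at hc
      obtain ⟨hc1, hc2⟩ := hc
      simp only [Finset.mem_coe, Finset.mem_filter, YPartition.mem_cells]
      refine ⟨⟨hq0, by rw [hrow0]; omega⟩, ?_, trivial⟩
      rw [harm0, hleg0]
      omega
    · rintro ⟨r, c⟩ hb
      simp only [Finset.mem_coe, Finset.mem_filter, YPartition.mem_cells] at hb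
      obtain ⟨_, _, hr0⟩ := hb
      simp [hr0]
    · intro c _
      rfl
  -- first column of p
  have claimA : (p.cells.filter
        (fun b => ((p.arm b.1 b.2 + 1) % 3 = p.leg b.1 b.2 % 3) ∧ b.2 = 0)).card
      = ((Finset.range p.colHeight).filter
        (fun r => (p.row r + r) % 3 = (p.colHeight + 1) % 3)).card := by
    apply Finset.card_nbij' (fun b => b.1) (fun r => (r, 0))
    · rintro ⟨r, c⟩ hb
      simp only [Finset.mem_coe, Finset.mem_filter, YPartition.mem_cells] at hb
      obtain ⟨⟨hmem1, hmem2⟩, hcond, hc0⟩ := hb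
      subst hc0
      rw [p.armp0 hmem1, YPartition.leg] at hcond
      have hpos : 0 < p.row r := (p.row_pos_iff r).2 hmem1
      simp only [Finset.mem_coe, Finset.mem_filter, Finset.mem_range]
      exact ⟨hmem1, by omega⟩
    · intro r hr
      simp only [Finset.mem_coe, Finset.mem_filter, Finset.mem_range] at hr
      obtain ⟨hr1, hr2⟩ := hr
      have hpos : 0 < p.row r := (p.row_pos_iff r).2 hr1
      simp only [Finset.mem_coe, Finset.mem_filter, YPartition.mem_cells]
      refine ⟨⟨hr1, hpos⟩, ?_, trivial⟩
      rw [p.armp0 hr1, YPartition.leg]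
      omega
    · rintro ⟨r, c⟩ hb
      simp only [Finset.mem_coe, Finset.mem_filter, YPartition.mem_cells] at hb
      obtain ⟨_, _, hc0⟩ := hb
      simp [hc0]
    · intro r _
      rfl
  -- the remaining boxes match up
  have claimM : (q.cells.filter
        (fun b => ((q.arm b.1 b.2 + 1) % 3 = q.leg b.1 b.2 % 3) ∧ ¬ b.1 = 0)).card
      = (p.cells.filter
        (fun b => ((p.arm b.1 b.2 + 1) % 3 = p.leg b.1 b.2 % 3) ∧ ¬ b.2 = 0)).card := by
    apply Finset.card_nbij' (fun b => (b.1 - 1, b.2 + 1)) (fun b => (b.1 + 1, b.2 - 1))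
    · rintro ⟨r, c⟩ hb
      simp only [Finset.mem_coe, Finset.mem_filter, YPartition.mem_cells] at hb
      obtain ⟨⟨hmem1, hmem2⟩, hcond, hr0⟩ := hb
      obtain ⟨r', rfl⟩ : ∃ r', r = r' + 1 := ⟨r - 1, by omega⟩
      rw [hrowS r'] at hmem2
      have hposq : 0 < q.row (r' + 1) := (q.row_pos_iff _).2 hmem1
      rw [hrowS r'] at hposq
      have hrk : r' < p.colHeight := (p.row_pos_iff r').1 (by omega)
      rw [harmS r' c, hlegS r' c] at hcond
      simp only [Finset.mem_coe, Finset.mem_filter, YPartition.mem_cells, Nat.add_sub_cancel]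
      exact ⟨⟨hrk, by omega⟩, hcond, by omega⟩
    · rintro ⟨r, c⟩ hb
      simp only [Finset.mem_coe, Finset.mem_filter, YPartition.mem_cells] at hb
      obtain ⟨⟨hmem1, hmem2⟩, hcond, hc0⟩ := hb
      obtain ⟨c', rfl⟩ : ∃ c', c = c' + 1 := ⟨c - 1, by omega⟩
      have hmemq : r + 1 < q.colHeight := by
        apply (q.row_pos_iff (r+1)).1
        rw [hrowS r]
        omega
      simp only [Finset.mem_coe, Finset.mem_filter, YPartition.mem_cells]
      refine ⟨⟨by simpa using hmemq, ?_⟩, ?_, by omega⟩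
      · show c' + 1 - 1 < q.row (r + 1)
        rw [hrowS r]
        omega
      · show (q.arm (r+1) (c'+1-1) + 1) % 3 = q.leg (r+1) (c'+1-1) % 3
        simp only [Nat.add_sub_cancel]
        rw [harmS r c', hlegS r c']
        exact hcond
    · rintro ⟨r, c⟩ hb
      simp only [Finset.mem_coe, Finset.mem_filter, YPartition.mem_cells] at hb
      obtain ⟨_, _, hr0⟩ := hb
      simp only [Prod.mk.injEq]
      omega
    · rintro ⟨r, c⟩ hb
      simp only [Finset.mem_coe, Finset.mem_filter, YPartition.mem_cells] at hb
      obtain ⟨_, _, hc0⟩ := hb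
      simp only [Prod.mk.injEq]
      omega
  have hkey := key_count p hjk
  have hwq : q.wtt = (q.cells.filter
      (fun b => (q.arm b.1 b.2 + 1) % 3 = q.leg b.1 b.2 % 3)).card := rfl
  have hwp : p.wtt = (p.cells.filter
      (fun b => (p.arm b.1 b.2 + 1) % 3 = p.leg b.1 b.2 % 3)).card := rfl
  omega
end

section
/- For any partition λ, the composition ψ₂ψ₂ρ₁ψ₂λ is not a well-defined Young diagram. Consequently, no {1,2}-composition containing the consecutive subsequence (2,2,1,2) (read in order of application) is admissible, i.e., lies in the image of the map φ from partitions to {1,2}-compositions. -/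
open YDPartition

private lemma map_getD_range (L : List ℕ) (n : ℕ) (h : L.length ≤ n) :
    (List.range n).map (fun i => L.getD i 0) = L ++ List.replicate (n - L.length) 0 := by
  apply List.ext_getElem
  · simp [Nat.add_sub_cancel' h]
  · intro i h1 h2
    simp only [List.getElem_map, List.getElem_range]
    by_cases hi : i < L.length
    · rw [List.getElem_append_left hi, List.getD_eq_getElem L 0 hi]
    · rw [List.getElem_append_right (Nat.le_of_not_lt hi), List.getElem_replicate,
        List.getD_eq_default L 0 (Nat.le_of_not_lt hi)]

private lemma psi2?_rows {p q : YDPartition} (h : psi2? p = some q) : q.rows = psi2Rows p := by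
  unfold psi2? at h
  split at h
  · cases h; rfl
  · cases h

private lemma rho1?_rows {p q : YDPartition} (h : rho1? p = some q) : q.rows = rho1Rows p := by
  unfold rho1? at h
  split at h
  · cases h; rfl
  · cases h

private lemma main_none (p : YDPartition) :
    ((psi2? p >>= rho1?) >>= psi2?) >>= psi2? = none := by
  set k := p.colHeight with hk
  set L := (p.rows.map (· - 1)).filter (fun x => decide (0 < x)) with hL
  have hLlen : L.length ≤ k := by
    calc L.length ≤ (p.rows.map (· - 1)).length := List.length_filter_le _ _
    _ = k := by simp [hk, colHeight]
  have hLpos : ∀ x ∈ L, 0 < x := by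
    intro x hx
    have := List.of_mem_filter hx
    simpa using this
  rcases hq : psi2? p with _ | q
  · simp [hq]
  have hqrows : q.rows = (k + 2) :: L := psi2?_rows hq
  rcases hr : rho1? q with _ | r
  · simp [hq, hr]
  have hrrows : r.rows = (List.range (k + 3)).map (fun i => L.getD i 0 + 1) := by
    rw [rho1?_rows hr]
    unfold rho1Rows rowLen row
    rw [hqrows]
    rfl
  rcases hs : psi2? r with _ | s
  · simp [hq, hr, hs]
  have hM : (r.rows.map (· - 1)).filter (fun x => decide (0 < x)) = L := by
    rw [hrrows, List.map_map]
    have he : ((· - 1) ∘ fun i => L.getD i 0 + 1) = fun i => L.getD i 0 := by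
      funext i; simp
    rw [he, map_getD_range L (k + 3) (by omega), List.filter_append]
    have h1 : L.filter (fun x => decide (0 < x)) = L :=
      List.filter_eq_self.mpr (by intro a ha; simpa using hLpos a ha)
    simp [h1]
  have hrlen : r.rows.length = k + 3 := by rw [hrrows]; simp
  have hsrows : s.rows = (k + 5) :: L := by
    rw [psi2?_rows hs]
    unfold psi2Rows colHeight
    rw [hM, hrlen]
  suffices h : psi2? s = none by simp [hq, hr, hs, h]
  unfold psi2?
  rw [dif_neg]
  rintro ⟨hsort, -⟩
  have hrows2 : psi2Rows s =
      (L.length + 3) :: (k + 4) :: (L.map (· - 1)).filter (fun x => decide (0 < x)) := by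
    unfold psi2Rows colHeight
    rw [hsrows]
    simp [List.filter_cons]
  rw [hrows2] at hsort
  have := (List.pairwise_cons.mp hsort).1 (k + 4) (by simp)
  omega

private lemma middle_none (p : YDPartition) (rest : List ℕ) :
    List.foldlM (fun q a => step a q) p (2 :: 1 :: 2 :: 2 :: rest) = none := by
  have h := main_none p
  rcases h1 : psi2? p with _ | p1
  · simp [List.foldlM_cons, step, h1]
  rcases h2 : rho1? p1 with _ | p2
  · simp [List.foldlM_cons, step, h1, h2]
  rcases h3 : psi2? p2 with _ | p3
  · simp [List.foldlM_cons, step, h1, h2, h3]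
  have h4 : psi2? p3 = none := by simpa [h1, h2, h3] using h
  simp [List.foldlM_cons, step, h1, h2, h3, h4]

open YDPartition in
/-- for any partition `λ`, `ψ₂ψ₂ρ₁ψ₂λ` is not a well-defined Young
diagram; consequently no `{1,2}`-composition containing the consecutive
subsequence `(2,2,1,2)` is admissible.  Here a composition `w` is written in
functional-composition order (as in `ψ₂ψ₂ρ₁ψ₂`), so the word in order of
application is `w.reverse`, and `w` is admissible iff
`applyWord w.reverse = some λ` for some partition `λ`. -/
theorem psi2_psi2_rho1_psi2_undefined :
    (∀ p : YDPartition, ((psi2? p >>= rho1?) >>= psi2?) >>= psi2? = none) ∧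
    (∀ w : List ℕ, [2, 2, 1, 2] <:+: w → ∀ p : YDPartition, applyWord w.reverse ≠ some p) := by
  constructor
  · exact main_none
  · intro w hw p hp
    obtain ⟨a, b, rfl⟩ := hw
    rw [applyWord] at hp
    have hrev : (a ++ [2, 2, 1, 2] ++ b).reverse
        = b.reverse ++ (2 :: 1 :: 2 :: 2 :: a.reverse) := by simp
    rw [hrev] at hp
    rw [List.foldlM_append] at hp
    rcases hinit : List.foldlM (fun p a => step a p) emptyP b.reverse with _ | q
    · rw [hinit] at hp; simp at hp
    · rw [hinit] at hp
      have hp' : List.foldlM (fun p a => step a p) q (2 :: 1 :: 2 :: 2 :: a.reverse)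
          = some p := hp
      rw [middle_none q a.reverse] at hp'
      exact Option.noConfusion rfl (heq_of_eq hp')
end

section
/- If a partition λ has the stair-step property with L(λ) = 0, then ψ₂λ has the stair-step property with L(ψ₂λ) = 2; if L(λ) = 1, then L(ψ₂λ) ∈ {1,2}; if L(λ) = 2, then L(ψ₂λ) ∈ {1,2}. -/
namespace YPartition

/-- The stair-step property: consecutive column heights decrease by at most one
(here `colH rowLen = 0`, so in particular the last column has height `1`). -/
def StairStep (p : YPartition) : Prop :=
  ∀ i < p.rowLen, p.colH i ≤ p.colH (i + 1) + 1

/-- The landing number: the number of indices `i` with `cᵢ = c_{i+1}`. -/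
def landing (p : YPartition) : ℕ :=
  ((Finset.range p.rowLen).filter
    (fun i => i + 1 < p.rowLen ∧ p.colH i = p.colH (i + 1))).card

end YPartition

namespace YPartition

lemma countP_range_getD (l : List ℕ) (P : ℕ → Bool) :
    (List.range l.length).countP (fun i => P (l.getD i 0)) = l.countP P := by
  induction l with
  | nil => simp
  | cons a t ih =>
    rw [List.length_cons, List.range_succ_eq_map, List.countP_cons, List.countP_map]
    simp only [List.getD_cons_zero, List.getD_cons_succ, Function.comp_def]
    rw [ih, List.countP_cons]

lemma sum_ite_range (n : ℕ) (P : ℕ → Bool) :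
    (∑ i ∈ Finset.range n, if P i = true then 1 else 0) = (List.range n).countP P := by
  induction n with
  | zero => simp
  | succ n ih =>
    rw [Finset.sum_range_succ, List.range_succ, List.countP_append, ih, List.countP_cons]
    simp

lemma colH_countP (p : YPartition) (c : ℕ) :
    p.colH c = p.rows.countP (fun x => decide (c < x)) := by
  rw [colH, colHeight, Finset.card_filter,
    ← countP_range_getD p.rows (fun x => decide (c < x)),
    ← sum_ite_range]
  apply Finset.sum_congr rfl
  intro i _
  simp [row]

end YPartition
namespace YPartition
variable (p : YPartition)

lemma rowLen_max {x : ℕ} (hx : x ∈ p.rows) : x ≤ p.rowLen := by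
  have hs := p.sorted
  rw [rowLen, row]
  rcases hr : p.rows with _ | ⟨a, t⟩
  · rw [hr] at hx; simp at hx
  · rw [hr] at hx hs
    rcases List.mem_cons.1 hx with rfl | h
    · simp
    · have := List.rel_of_pairwise_cons hs h; simp only [List.getD_cons_zero]; omega

lemma colH_antitone {c d : ℕ} (h : c ≤ d) : p.colH d ≤ p.colH c := by
  rw [colH_countP, colH_countP]
  apply List.countP_mono_left
  intro x _ hx
  simp only [decide_eq_true_eq] at *
  omega

lemma colH_zero : p.colH 0 = p.colHeight := by
  rw [colH_countP, colHeight, List.countP_eq_length]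
  intro x hx
  simpa using p.pos x hx

lemma colH_pos_iff {c : ℕ} : 0 < p.colH c ↔ c < p.rowLen := by
  rw [colH_countP, List.countP_pos_iff]
  constructor
  · rintro ⟨x, hx, hc⟩
    simp only [decide_eq_true_eq] at hc
    exact lt_of_lt_of_le hc (p.rowLen_max hx)
  · intro h
    rw [rowLen, row] at h
    rcases hr : p.rows with _ | ⟨a, t⟩
    · rw [hr] at h; simp at h
    · rw [hr] at h
      exact ⟨a, List.mem_cons_self, by simpa using h⟩

lemma colH_eq_zero {c : ℕ} (h : p.rowLen ≤ c) : p.colH c = 0 := by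
  by_contra hc
  have := p.colH_pos_iff.1 (Nat.pos_of_ne_zero hc)
  omega

end YPartition
namespace YPartition
variable (p : YPartition)

lemma rowLen_pos (hne : p.rows ≠ []) : 0 < p.rowLen := by
  have : 0 < p.colH 0 := by
    rw [colH_zero, colHeight]
    exact List.length_pos_iff.2 hne
  exact p.colH_pos_iff.1 this

lemma jkL (hne : p.rows ≠ []) (hs : StairStep p) :
    p.rowLen = p.colHeight + p.landing := by
  have hj : 0 < p.rowLen := p.rowLen_pos hne
  have tele : ∀ n, p.colH 0 = p.colH n + ∑ i ∈ Finset.range n, (p.colH i - p.colH (i+1)) := by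
    intro n
    induction n with
    | zero => simp
    | succ n ih =>
      rw [Finset.sum_range_succ]
      have h2 := p.colH_antitone (Nat.le_succ n)
      simp only [Nat.succ_eq_add_one] at *
      omega
  have hk : p.colHeight = ∑ i ∈ Finset.range p.rowLen, (p.colH i - p.colH (i+1)) := by
    have h1 := tele p.rowLen
    rw [colH_zero] at h1
    rw [p.colH_eq_zero (le_refl p.rowLen)] at h1
    omega
  have hsum : ∑ i ∈ Finset.range p.rowLen, ((p.colH i - p.colH (i+1)) +
      (1 - (p.colH i - p.colH (i+1)))) = p.rowLen := by
    rw [Finset.sum_congr rfl (fun i hi => ?_), Finset.sum_const, Finset.card_range, smul_eq_mul, mul_one]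
    have h1 := hs i (Finset.mem_range.1 hi)
    have h2 := p.colH_antitone (Nat.le_succ i)
    simp only [Nat.succ_eq_add_one] at *
    omega
  rw [Finset.sum_add_distrib] at hsum
  have hz : ∑ i ∈ Finset.range p.rowLen, (1 - (p.colH i - p.colH (i+1))) =
      ((Finset.range p.rowLen).filter (fun i => p.colH i = p.colH (i+1))).card := by
    rw [Finset.card_filter]
    apply Finset.sum_congr rfl
    intro i hi
    have h1 := hs i (Finset.mem_range.1 hi)
    have h2 := p.colH_antitone (Nat.le_succ i)
    simp only [Nat.succ_eq_add_one] at h2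
    split_ifs with h <;> omega
  have hcard : ((Finset.range p.rowLen).filter (fun i => p.colH i = p.colH (i+1))).card
      = p.landing := by
    rw [landing]
    congr 1
    apply Finset.filter_congr
    intro i hi
    rw [Finset.mem_range] at hi
    constructor
    · intro hP
      refine ⟨?_, hP⟩
      by_contra hlt
      have hij : i = p.rowLen - 1 := by omega
      have hpos : 0 < p.colH i := p.colH_pos_iff.2 hi
      have h0 : p.colH (i+1) = 0 := p.colH_eq_zero (by omega)
      omega
    · exact fun h => h.2
  omega

end YPartition
namespace YPartition
variable (p : YPartition)

lemma psi2_isYD (h : p.rowLen ≤ p.colHeight + 3) : IsYD (psi2Rows p) := by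
  constructor
  · rw [psi2Rows, List.pairwise_cons]
    constructor
    · intro b hb
      rw [List.mem_filter] at hb
      obtain ⟨y, hy, rfl⟩ := List.mem_map.1 hb.1
      have := p.rowLen_max hy
      omega
    · exact List.Pairwise.filter _ (List.Pairwise.map _ (fun a b hab => by omega) p.sorted)
  · intro x hx
    rw [psi2Rows, List.mem_cons] at hx
    rcases hx with rfl | hx
    · omega
    · have := List.of_mem_filter hx
      simpa using this

lemma colH_psi2 (q : YPartition) (hq : q.rows = psi2Rows p) (c : ℕ) :
    q.colH c = (if c < p.colHeight + 2 then 1 else 0) + p.colH (c+1) := by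
  rw [colH_countP, hq, psi2Rows, List.countP_cons, List.countP_filter, List.countP_map,
    colH_countP]
  have : List.countP ((fun x => decide (c < x) && decide (0 < x)) ∘ (· - 1)) p.rows
      = List.countP (fun x => decide (c + 1 < x)) p.rows := by
    apply List.countP_congr
    intro x _
    simp only [Function.comp_apply, Bool.and_eq_true, decide_eq_true_eq]
    omega
  rw [this]
  by_cases h : c < p.colHeight + 2 <;> simp [h] <;> omega

lemma landing_eq (hne : p.rows ≠ []) :
    p.landing = ((Finset.range (p.rowLen - 1)).filter
      (fun i => p.colH i = p.colH (i+1))).card := by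
  have hj := p.rowLen_pos hne
  rw [landing]
  congr 1
  ext i
  simp only [Finset.mem_filter, Finset.mem_range]
  constructor
  · rintro ⟨h1, h2, h3⟩; exact ⟨by omega, h3⟩
  · rintro ⟨h1, h2⟩; exact ⟨by omega, by omega, h2⟩

lemma L0_le (hne : p.rows ≠ []) :
    (if p.colH 0 = p.colH 1 then 1 else 0) ≤ p.landing := by
  split_ifs with h
  · have h1 : 1 < p.rowLen := by
      have hk : 0 < p.colH 1 := by
        rw [← h, colH_zero, colHeight]
        exact List.length_pos_iff.2 hne
      exact p.colH_pos_iff.1 hk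
    refine Finset.card_pos.2 ⟨0, Finset.mem_filter.2 ⟨Finset.mem_range.2 (by omega), ?_⟩⟩
    exact ⟨by omega, h⟩
  · exact Nat.zero_le _

lemma psi2_main (hne : p.rows ≠ []) (hs : StairStep p) (hL : p.landing ≤ 2) :
    ∃ q, psi2? p = some q ∧ StairStep q ∧
      q.landing + (if p.colH 0 = p.colH 1 then 1 else 0) = 2 := by
  have hj := p.jkL hne hs
  have hj1 := p.rowLen_pos hne
  have hYD : IsYD (psi2Rows p) := p.psi2_isYD (by omega)
  set q : YPartition := ⟨psi2Rows p, hYD.1, hYD.2⟩ with hqdef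
  have hq : q.rows = psi2Rows p := rfl
  have hcol : ∀ c, q.colH c = (if c < p.colHeight + 2 then 1 else 0) + p.colH (c+1) :=
    p.colH_psi2 q hq
  have hql : q.rowLen = p.colHeight + 2 := by
    rw [rowLen, row, hq, psi2Rows]
    simp
  refine ⟨q, by rw [psi2?, dif_pos hYD], ?_, ?_⟩
  · intro c hc
    rw [hql] at hc
    rw [hcol c, hcol (c+1), if_pos hc]
    by_cases h2 : c + 1 < p.colHeight + 2
    · rw [if_pos h2]
      by_cases h3 : c + 1 < p.rowLen
      · have := hs (c+1) h3
        omega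
      · have := p.colH_eq_zero (c := c+1) (by omega)
        omega
    · rw [if_neg h2]
      have := p.colH_eq_zero (c := c+1) (by omega)
      omega
  · have hN : q.landing = ((Finset.range (p.colHeight+1)).filter
        (fun c => p.colH (c+1) = p.colH (c+2))).card := by
      rw [landing, hql]
      congr 1
      ext c
      simp only [Finset.mem_filter, Finset.mem_range]
      constructor
      · rintro ⟨h1, h2, h3⟩
        rw [hcol c, hcol (c+1), if_pos (show c < p.colHeight+2 by omega),
          if_pos (show c+1 < p.colHeight+2 by omega)] at h3
        have hee : p.colH (c+1+1) = p.colH (c+2) := congrArg p.colH (by omega)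
        exact ⟨by omega, by omega⟩
      · rintro ⟨h1, h2⟩
        refine ⟨by omega, by omega, ?_⟩
        rw [hcol c, hcol (c+1), if_pos (by omega), if_pos (by omega)]
        have hee : p.colH (c+1+1) = p.colH (c+2) := congrArg p.colH (by omega)
        omega
    have hM : ((Finset.range (p.colHeight+2)).filter
        (fun i => p.colH i = p.colH (i+1))).card
        = ((Finset.range (p.colHeight+1)).filter
          (fun c => p.colH (c+1) = p.colH (c+2))).card
          + (if p.colH 0 = p.colH 1 then 1 else 0) := by
      rw [Finset.card_filter, Finset.card_filter, Finset.sum_range_succ']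
    have hM2 : ((Finset.range (p.colHeight+2)).filter
        (fun i => p.colH i = p.colH (i+1))).card = 2 := by
      rw [Finset.card_filter, Finset.range_eq_Ico,
        ← Finset.sum_Ico_consecutive _ (Nat.zero_le (p.rowLen - 1)) (by omega : p.rowLen - 1 ≤ p.colHeight + 2),
        ← Finset.range_eq_Ico]
      have e1 : ∑ i ∈ Finset.range (p.rowLen - 1),
          (if p.colH i = p.colH (i+1) then 1 else 0) = p.landing := by
        rw [p.landing_eq hne, Finset.card_filter]
      rw [e1, Finset.sum_Ico_eq_sum_range]
      have e2 : p.colHeight + 2 - (p.rowLen - 1) = (2 - p.landing) + 1 := by omega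
      rw [e2, Finset.sum_range_succ']
      have e3 : ∑ k ∈ Finset.range (2 - p.landing),
          (if p.colH (p.rowLen - 1 + (k + 1)) = p.colH (p.rowLen - 1 + (k + 1) + 1) then 1 else 0)
          = 2 - p.landing := by
        rw [Finset.sum_congr rfl (fun k _ => ?_), Finset.sum_const, smul_eq_mul, mul_one,
          Finset.card_range]
        rw [if_pos]
        rw [p.colH_eq_zero (by omega), p.colH_eq_zero (by omega)]
      have e4 : (if p.colH (p.rowLen - 1 + 0) = p.colH (p.rowLen - 1 + 0 + 1) then (1:ℕ) else 0) = 0 := by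
        have h1 : p.colH (p.rowLen - 1 + 0) = p.colH (p.rowLen - 1) :=
          congrArg p.colH (by omega)
        have h2 : p.colH (p.rowLen - 1 + 0 + 1) = 0 := p.colH_eq_zero (by omega)
        have hp1 : 0 < p.colH (p.rowLen - 1) := p.colH_pos_iff.2 (by omega)
        rw [if_neg (by omega)]
      rw [e3, e4]
      omega
    omega

end YPartition

open YPartition in
/-- for a (nonempty) partition with the stair-step property:
if `L(λ) = 0` then `ψ₂λ` has the stair-step property with `L(ψ₂λ) = 2`;
if `L(λ) = 1` then `L(ψ₂λ) ∈ {1,2}`; if `L(λ) = 2` then `L(ψ₂λ) ∈ {1,2}`. -/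
theorem landing_of_psi2 (p : YPartition) (hne : p.rows ≠ []) (hs : StairStep p) :
    (p.landing = 0 → ∃ q, psi2? p = some q ∧ StairStep q ∧ q.landing = 2) ∧
    (p.landing = 1 → ∃ q, psi2? p = some q ∧ q.landing ∈ ({1, 2} : Set ℕ)) ∧
    (p.landing = 2 → ∃ q, psi2? p = some q ∧ q.landing ∈ ({1, 2} : Set ℕ)) := by
  refine ⟨fun hLv => ?_, fun hLv => ?_, fun hLv => ?_⟩ <;>
    obtain ⟨q, h1, h2, h3⟩ := p.psi2_main hne hs (by omega) <;>
    have hL0 := p.L0_le hne <;>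
    split_ifs at h3 hL0 with h
  · exact ⟨q, h1, h2, by omega⟩
  · exact ⟨q, h1, h2, by omega⟩
  · exact ⟨q, h1, by simp only [Set.mem_insert_iff, Set.mem_singleton_iff]; omega⟩
  · exact ⟨q, h1, by simp only [Set.mem_insert_iff, Set.mem_singleton_iff]; omega⟩
  · exact ⟨q, h1, by simp only [Set.mem_insert_iff, Set.mem_singleton_iff]; omega⟩
  · exact ⟨q, h1, by simp only [Set.mem_insert_iff, Set.mem_singleton_iff]; omega⟩
end
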